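/- arXiv:1505.07903 — 2 statements merged into one kernel-verified Lean document; each statement's English description precedes it below -/
import Mathlib

section
/- Suppose (f_j^R, f_j^I) satisfy condition H1 with constants λ_j^{RR}, λ_j^{RI}, λ_j^{IR}, λ_j^{II} and (g_j^R, g_j^I) satisfy condition H2 with constants μ_j^{RR}, μ_j^{RI}, μ_j^{IR}, μ_j^{II}, for j = 1,…,n. Suppose there exist positive reals ξ_1,…,ξ_n, φ_1,…,φ_n and ε > 0 such that for every j = 1,…,n both: (i) ξ_j(−d_j + ε + (a_{jj}^R)⁺λ_j^{RR} + (−a_{jj}^I)⁺λ_j^{IR}) + Σ_{k≠j} ξ_k|a_{jk}^R|λ_k^{RR} + Σ_{k=1}^n φ_k|a_{jk}^R|λ_k^{RI} + Σ_{k≠j} ξ_k|a_{jk}^I|λ_k^{IR} + Σ_{k=1}^n φ_k|a_{jk}^I|λ_k^{II} + Σ_{k=1}^n (ξ_k|b_{jk}^R|μ_k^{RR} + φ_k|b_{jk}^R|μ_k^{RI} + ξ_k|b_{jk}^I|μ_k^{IR} + φ_k|b_{jk}^I|μ_k^{II}) e^{ε τ_{jk}} ≤ 0, and (ii) φ_j(−d_j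 + ε + (a_{jj}^R)⁺λ_j^{II} + (a_{jj}^I)⁺λ_j^{RI}) + Σ_{k=1}^n ξ_k|a_{jk}^R|λ_k^{IR} + Σ_{k≠j} φ_k|a_{jk}^R|λ_k^{II} + Σ_{k=1}^n ξ_k|a_{jk}^I|λ_k^{RR} + Σ_{k≠j} φ_k|a_{jk}^I|λ_k^{RI} + Σ_{k=1}^n (ξ_k|b_{jk}^R|μ_k^{IR} + φ_k|b_{jk}^R|μ_k^{II} + ξ_k|b_{jk}^I|μ_k^{RR} + φ_k|b_{jk}^I|μ_k^{RI}) e^{ε τ_{jk}} ≤ 0. If the network admits at least one solution, then it has exactly one equilibrium Z̄ ∈ ℝ^{2n}, and for every solution Z(t) there is a constant c > 0 such that ‖Z(t) − Z̄‖_{ξ,∞} ≤ c e^{−εt} and ‖(d/dt)Z(t)‖_{ξ,∞} ≤ c e^{−εt} for all t ≥ 0. -/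
open Finset

/-- A solution of the delayed complex-valued network, decomposed into real and
imaginary parts. -/
def IsSolution (n : ℕ) (d : Fin n → ℝ)
    (aR aI bR bI τ : Fin n → Fin n → ℝ)
    (uR uI : Fin n → ℝ)
    (fR fI gR gI : Fin n → ℝ → ℝ → ℝ)
    (zR zI : Fin n → ℝ → ℝ) : Prop :=
  (∀ j, ContDiff ℝ 1 (zR j)) ∧ (∀ j, ContDiff ℝ 1 (zI j)) ∧
  (∀ j : Fin n, ∀ t : ℝ, 0 ≤ t →
    deriv (zR j) t =
      -(d j) * zR j t
      + (∑ k, (aR j k * fR k (zR k t) (zI k t) - aI j k * fI k (zR k t) (zI k t)))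
      + (∑ k, (bR j k * gR k (zR k (t - τ j k)) (zI k (t - τ j k))
               - bI j k * gI k (zR k (t - τ j k)) (zI k (t - τ j k))))
      + uR j) ∧
  (∀ j : Fin n, ∀ t : ℝ, 0 ≤ t →
    deriv (zI j) t =
      -(d j) * zI j t
      + (∑ k, (aR j k * fI k (zR k t) (zI k t) + aI j k * fR k (zR k t) (zI k t)))
      + (∑ k, (bR j k * gI k (zR k (t - τ j k)) (zI k (t - τ j k))
               + bI j k * gR k (zR k (t - τ j k)) (zI k (t - τ j k))))
      + uI j)

/-- An equilibrium of the network: a point of ℝ^{2n} at which both right-hand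
sides vanish. -/
def IsEquilibrium (n : ℕ) (d : Fin n → ℝ)
    (aR aI bR bI : Fin n → Fin n → ℝ)
    (uR uI : Fin n → ℝ)
    (fR fI gR gI : Fin n → ℝ → ℝ → ℝ)
    (zbR zbI : Fin n → ℝ) : Prop :=
  (∀ j : Fin n,
    -(d j) * zbR j
    + (∑ k, (aR j k * fR k (zbR k) (zbI k) - aI j k * fI k (zbR k) (zbI k)))
    + (∑ k, (bR j k * gR k (zbR k) (zbI k) - bI j k * gI k (zbR k) (zbI k)))
    + uR j = 0) ∧
  (∀ j : Fin n,
    -(d j) * zbI j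
    + (∑ k, (aR j k * fI k (zbR k) (zbI k) + aI j k * fR k (zbR k) (zbI k)))
    + (∑ k, (bR j k * gI k (zbR k) (zbI k) + bI j k * gR k (zbR k) (zbI k)))
    + uI j = 0)

/-- Condition H1: continuously differentiable with positive, bounded partial
derivatives. -/
def CondH1 (f1 f2 : ℝ → ℝ → ℝ) (lRR lRI lIR lII : ℝ) : Prop :=
  ContDiff ℝ 1 (fun p : ℝ × ℝ => f1 p.1 p.2) ∧
  ContDiff ℝ 1 (fun p : ℝ × ℝ => f2 p.1 p.2) ∧
  (∀ x y : ℝ,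
    (0 < deriv (fun s => f1 s y) x ∧ deriv (fun s => f1 s y) x ≤ lRR) ∧
    (0 < deriv (fun s => f1 x s) y ∧ deriv (fun s => f1 x s) y ≤ lRI) ∧
    (0 < deriv (fun s => f2 s y) x ∧ deriv (fun s => f2 s y) x ≤ lIR) ∧
    (0 < deriv (fun s => f2 x s) y ∧ deriv (fun s => f2 x s) y ≤ lII))

/-- Condition H2: continuously differentiable with bounded partial derivatives. -/
def CondH2 (g1 g2 : ℝ → ℝ → ℝ) (mRR mRI mIR mII : ℝ) : Prop :=
  ContDiff ℝ 1 (fun p : ℝ × ℝ => g1 p.1 p.2) ∧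
  ContDiff ℝ 1 (fun p : ℝ × ℝ => g2 p.1 p.2) ∧
  (∀ x y : ℝ,
    |deriv (fun s => g1 s y) x| ≤ mRR ∧
    |deriv (fun s => g1 x s) y| ≤ mRI ∧
    |deriv (fun s => g2 s y) x| ≤ mIR ∧
    |deriv (fun s => g2 x s) y| ≤ mII)

/-!
Weight the real coordinates by `ξ` and the imaginary ones by `φ` and compare two solutions in the
resulting sup norm. Fix `ε' < ε` and suppose the difference first touches an envelope
`K e^{-ε' t}` that bounds it on the whole delay window. At a coordinate realising the norm, H1
makes the self-coupling contribute only through positive parts, the Lipschitz bounds control the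
other instantaneous terms, and the delayed terms are at most `e^{ε' τ}` times the envelope; by
condition (i) or (ii) that coordinate then decays strictly faster than `e^{-ε' t}`, which is
impossible at a first touching time. Hence any two solutions approach each other like `e^{-ε t}`.

Comparing a solution with its own time shifts by `h` and letting `h → 0` gives `e^{-ε t}` decay of
its velocity, so the solution converges, and its limit is an equilibrium. Viewed as constant
solutions, two equilibria must coincide, and every solution converges to the equilibrium at rate
`e^{-ε t}`.
-/

open Real Filter Topology Set

lemma abs_sub_le_of_abs_deriv_le {u : ℝ → ℝ} {L : ℝ} (hu : Differentiable ℝ u)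
    (h : ∀ x, |deriv u x| ≤ L) (a b : ℝ) : |u a - u b| ≤ L * |a - b| :=
  convex_univ.norm_image_sub_le_of_norm_deriv_le (fun x _ => hu x) (fun x _ => h x)
    (mem_univ b) (mem_univ a)

lemma sign_mul_le_abs {σ : ℝ} (hσ : σ = 1 ∨ σ = -1) (a : ℝ) : σ * a ≤ |a| := by
  rcases hσ with rfl | rfl
  · simpa using le_abs_self a
  · simpa using neg_le_abs a

def SepLipschitz (f : ℝ → ℝ → ℝ) (Lx Ly : ℝ) : Prop :=
  ∀ x y x' y', |f x y - f x' y'| ≤ Lx * |x - x'| + Ly * |y - y'|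

section SepLipschitz

variable {f : ℝ → ℝ → ℝ} {Lx Ly : ℝ}

lemma SepLipschitz.nonneg_left (hf : SepLipschitz f Lx Ly) : 0 ≤ Lx := by
  have := hf 1 0 0 0
  simp only [sub_zero, abs_one, mul_one, sub_self, abs_zero, mul_zero, add_zero] at this
  exact (abs_nonneg _).trans this

lemma SepLipschitz.nonneg_right (hf : SepLipschitz f Lx Ly) : 0 ≤ Ly := by
  have := hf 0 1 0 0
  simp only [sub_zero, abs_one, mul_one, sub_self, abs_zero, mul_zero, zero_add] at this
  exact (abs_nonneg _).trans this

lemma SepLipschitz.swap (hf : SepLipschitz f Lx Ly) : SepLipschitz (fun x y => f y x) Ly Lx :=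
  fun x y x' y' => (hf y x y' x').trans_eq (add_comm _ _)

lemma sepLipschitz_of_abs_deriv_le (hx : ∀ y, Differentiable ℝ fun x => f x y)
    (hy : ∀ x, Differentiable ℝ (f x)) (hLx : ∀ x y, |deriv (fun s => f s y) x| ≤ Lx)
    (hLy : ∀ x y, |deriv (f x) y| ≤ Ly) : SepLipschitz f Lx Ly := fun x y x' y' =>
  calc |f x y - f x' y'| ≤ |f x y - f x' y| + |f x' y - f x' y'| := abs_sub_le _ _ _
    _ ≤ Lx * |x - x'| + Ly * |y - y'| :=
      add_le_add (abs_sub_le_of_abs_deriv_le (hx y) (hLx · y) x x')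
        (abs_sub_le_of_abs_deriv_le (hy x') (hLy x' ·) y y')

lemma sign_mul_sub_le_of_sepLipschitz (hf : SepLipschitz f Lx Ly) {σ : ℝ}
    (hσ : σ = 1 ∨ σ = -1) (c : ℝ) {x y x' y' a b : ℝ} (ha : |x - x'| ≤ a) (hb : |y - y'| ≤ b) :
    σ * (c * (f x y - f x' y')) ≤ |c| * (Lx * a + Ly * b) := by
  calc σ * (c * (f x y - f x' y')) ≤ |c| * |f x y - f x' y'| :=
        (sign_mul_le_abs hσ _).trans_eq (abs_mul _ _)
    _ ≤ |c| * (Lx * a + Ly * b) := by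
      gcongr
      exact (hf x y x' y').trans (add_le_add (mul_le_mul_of_nonneg_left ha hf.nonneg_left)
        (mul_le_mul_of_nonneg_left hb hf.nonneg_right))

/-- Monotonicity in `x` makes `σ (f x y - f x' y)` nonnegative, so only the positive part of `c`
survives. -/
lemma sign_mul_sub_le_of_monotone (hf : SepLipschitz f Lx Ly)
    (hmono : ∀ y, Monotone fun x => f x y) {σ : ℝ} (hσ : σ = 1 ∨ σ = -1) (c : ℝ)
    {x y x' y' b : ℝ} (hx : σ * (x - x') = |x - x'|) (hb : |y - y'| ≤ b) :
    σ * (c * (f x y - f x' y')) ≤ max c 0 * (Lx * |x - x'|) + |c| * (Ly * b) := by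
  have hslope : 0 ≤ σ * (f x y - f x' y) ∧ σ * (f x y - f x' y) ≤ Lx * |x - x'| := by
    refine ⟨?_, (sign_mul_le_abs hσ _).trans ?_⟩
    · rcases hσ with rfl | rfl
      · have : x' ≤ x := by linarith [abs_nonneg (x - x')]
        linarith [hmono y this]
      · have : x ≤ x' := by linarith [abs_nonneg (x - x')]
        linarith [hmono y this]
    · simpa using hf x y x' y
  have hy : σ * (c * (f x' y - f x' y')) ≤ |c| * (Lx * 0 + Ly * b) :=
    sign_mul_sub_le_of_sepLipschitz hf hσ c (by simp) hb
  have hpos : c * (σ * (f x y - f x' y)) ≤ max c 0 * (Lx * |x - x'|) := by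
    rcases le_total c 0 with hc | hc
    · rw [max_eq_right hc]; nlinarith
    · rw [max_eq_left hc]; exact mul_le_mul_of_nonneg_left hslope.2 hc
  have hsplit : σ * (c * (f x y - f x' y')) =
      c * (σ * (f x y - f x' y)) + σ * (c * (f x' y - f x' y')) := by ring
  rw [hsplit]
  linarith

end SepLipschitz

section Hypotheses

variable {f₁ f₂ : ℝ → ℝ → ℝ} {l₁ l₂ l₃ l₄ : ℝ}

lemma CondH1.fst_sepLipschitz (h : CondH1 f₁ f₂ l₁ l₂ l₃ l₄) : SepLipschitz f₁ l₁ l₂ :=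
  sepLipschitz_of_abs_deriv_le
    (fun y x => differentiableAt_of_deriv_ne_zero ((h.2.2 x y).1.1.ne'))
    (fun x y => differentiableAt_of_deriv_ne_zero ((h.2.2 x y).2.1.1.ne'))
    (fun x y => (abs_of_pos (h.2.2 x y).1.1).trans_le (h.2.2 x y).1.2)
    (fun x y => (abs_of_pos (h.2.2 x y).2.1.1).trans_le (h.2.2 x y).2.1.2)

lemma CondH1.snd_sepLipschitz (h : CondH1 f₁ f₂ l₁ l₂ l₃ l₄) : SepLipschitz f₂ l₃ l₄ :=
  sepLipschitz_of_abs_deriv_le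
    (fun y x => differentiableAt_of_deriv_ne_zero ((h.2.2 x y).2.2.1.1.ne'))
    (fun x y => differentiableAt_of_deriv_ne_zero ((h.2.2 x y).2.2.2.1.ne'))
    (fun x y => (abs_of_pos (h.2.2 x y).2.2.1.1).trans_le (h.2.2 x y).2.2.1.2)
    (fun x y => (abs_of_pos (h.2.2 x y).2.2.2.1).trans_le (h.2.2 x y).2.2.2.2)

lemma CondH1.fst_monotone_left (h : CondH1 f₁ f₂ l₁ l₂ l₃ l₄) (y : ℝ) :
    Monotone fun x => f₁ x y :=
  (strictMono_of_deriv_pos fun x => (h.2.2 x y).1.1).monotone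

lemma CondH1.fst_monotone_right (h : CondH1 f₁ f₂ l₁ l₂ l₃ l₄) (x : ℝ) : Monotone (f₁ x) :=
  (strictMono_of_deriv_pos fun y => (h.2.2 x y).2.1.1).monotone

lemma CondH1.snd_monotone_left (h : CondH1 f₁ f₂ l₁ l₂ l₃ l₄) (y : ℝ) :
    Monotone fun x => f₂ x y :=
  (strictMono_of_deriv_pos fun x => (h.2.2 x y).2.2.1.1).monotone

lemma CondH1.snd_monotone_right (h : CondH1 f₁ f₂ l₁ l₂ l₃ l₄) (x : ℝ) : Monotone (f₂ x) :=
  (strictMono_of_deriv_pos fun y => (h.2.2 x y).2.2.2.1).monotone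

lemma CondH2.fst_sepLipschitz (h : CondH2 f₁ f₂ l₁ l₂ l₃ l₄) : SepLipschitz f₁ l₁ l₂ :=
  have hd := h.1.differentiable one_ne_zero
  sepLipschitz_of_abs_deriv_le
    (fun y => hd.comp (differentiable_id.prodMk (differentiable_const y)))
    (fun x => hd.comp ((differentiable_const x).prodMk differentiable_id))
    (fun x y => (h.2.2 x y).1) (fun x y => (h.2.2 x y).2.1)

lemma CondH2.snd_sepLipschitz (h : CondH2 f₁ f₂ l₁ l₂ l₃ l₄) : SepLipschitz f₂ l₃ l₄ :=
  have hd := h.2.1.differentiable one_ne_zero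
  sepLipschitz_of_abs_deriv_le
    (fun y => hd.comp (differentiable_id.prodMk (differentiable_const y)))
    (fun x => hd.comp ((differentiable_const x).prodMk differentiable_id))
    (fun x y => (h.2.2 x y).2.2.1) (fun x y => (h.2.2 x y).2.2.2)

end Hypotheses

section Barrier

lemma exists_sign_mul_eq_norm {ι : Type*} [Fintype ι] {x : ι → ℝ} (hx : 0 < ‖x‖) :
    ∃ i σ, (σ = 1 ∨ σ = -1) ∧ σ * x i = ‖x‖ := by
  have : Nonempty ι := by
    by_contra hι
    rw [not_nonempty_iff] at hι
    exact hx.not_ge ((pi_norm_le_iff_of_nonneg le_rfl).2 hι.elim)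
  obtain ⟨i, -, hi⟩ := exists_max_image univ (fun i => |x i|) univ_nonempty
  have hxi : |x i| = ‖x‖ := le_antisymm (by simpa using norm_le_pi_norm x i)
    ((pi_norm_le_iff_of_nonneg (abs_nonneg _)).2 fun k => by simpa using hi k (mem_univ k))
  rcases le_or_gt 0 (x i) with h | h
  · exact ⟨i, 1, Or.inl rfl, by rw [one_mul, ← hxi, abs_of_nonneg h]⟩
  · exact ⟨i, -1, Or.inr rfl, by rw [← hxi, abs_of_neg h]; ring⟩

lemma HasDerivAt.nonneg_of_le_left {g : ℝ → ℝ} {g' a t : ℝ} (hg : HasDerivAt g g' t)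
    (hat : a < t) (hmax : ∀ s ∈ Ioo a t, g s ≤ g t) : 0 ≤ g' := by
  have hslope : Tendsto (slope g t) (𝓝[<] t) (𝓝 g') :=
    (hasDerivAt_iff_tendsto_slope.1 hg).mono_left (nhdsWithin_mono _ fun s (hs : s < t) => hs.ne)
  refine ge_of_tendsto hslope ?_
  filter_upwards [Ioo_mem_nhdsLT hat] with s hs
  rw [slope_def_field]
  exact div_nonneg_of_nonpos (by linarith [hmax s hs]) (by linarith [hs.2])

lemma add_nonneg_of_le_exp_envelope {q : ℝ → ℝ} {q' a c K ε : ℝ}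
    (hq : HasDerivAt q q' c) (hac : a < c) (hle : ∀ s ∈ Ioo a c, q s ≤ K * exp (-ε * s))
    (hqc : q c = K * exp (-ε * c)) : 0 ≤ q' + ε * (K * exp (-ε * c)) := by
  have hcancel : ∀ s, exp (-ε * s) * exp (ε * s) = 1 := fun s => by
    rw [← exp_add]; simp
  have hg : HasDerivAt (fun s => q s * exp (ε * s))
      (exp (ε * c) * (q' + ε * (K * exp (-ε * c)))) c := by
    refine (hq.mul ((hasDerivAt_id c).const_mul ε).exp).congr_deriv ?_
    rw [hqc, id]
    ring
  refine nonneg_of_mul_nonneg_right (hg.nonneg_of_le_left hac fun s hs => ?_) (exp_pos _)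
  calc q s * exp (ε * s) ≤ K * exp (-ε * s) * exp (ε * s) := by gcongr; exact hle s hs
    _ = q c * exp (ε * c) := by rw [hqc, mul_assoc, mul_assoc, hcancel, hcancel]

lemma exists_first_hit {ρ : ℝ → ℝ} (hρ : Continuous ρ) {a b K : ℝ} (hab : a ≤ b)
    (ha : ρ a < K) (hb : K ≤ ρ b) : ∃ c ∈ Ioc a b, ρ c = K ∧ ∀ s ∈ Icc a c, ρ s ≤ K := by
  set S := Icc a b ∩ {s | K ≤ ρ s}
  have hS : IsClosed S := isClosed_Icc.inter (isClosed_le continuous_const hρ)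
  have hSbdd : BddBelow S := ⟨a, fun s hs => hs.1.1⟩
  obtain ⟨⟨hac, hcb⟩, hKc⟩ := hS.csInf_mem ⟨b, ⟨hab, le_rfl⟩, hb⟩ hSbdd
  have hbefore : ∀ s ∈ Ico a (sInf S), ρ s < K := fun s hs => not_le.1 fun hKs =>
    (csInf_le hSbdd ⟨⟨hs.1, hs.2.le.trans hcb⟩, hKs⟩).not_gt hs.2
  obtain ⟨c, hc, hρc⟩ := intermediate_value_Icc hac hρ.continuousOn ⟨ha.le, hKc⟩
  have hcS : c = sInf S := le_antisymm hc.2 (csInf_le hSbdd ⟨⟨hc.1, hc.2.trans hcb⟩, hρc.ge⟩)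
  rw [← hcS] at hac hcb hbefore
  refine ⟨c, ⟨lt_of_le_of_ne hac ?_, hcb⟩, hρc, fun s hs => ?_⟩
  · rintro rfl; exact ha.ne hρc
  · rcases hs.2.lt_or_eq with hlt | rfl
    · exact (hbefore s ⟨hs.1, hlt⟩).le
    · exact hρc.le

lemma exp_mul_le_iff_le_mul_exp_neg {ε s a K : ℝ} :
    exp (ε * s) * a ≤ K ↔ a ≤ K * exp (-ε * s) := by
  rw [neg_mul, exp_neg, ← div_eq_mul_inv, le_div_iff₀ (exp_pos _), mul_comm]

lemma le_mul_exp_of_forall_lt {a B ε t : ℝ} (hε : 0 < ε)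
    (h : ∀ ε' ∈ Ioo 0 ε, a ≤ B * exp (-ε' * t)) : a ≤ B * exp (-ε * t) := by
  have hcont : Continuous fun ε' => B * exp (-ε' * t) := by fun_prop
  refine ge_of_tendsto (hcont.continuousAt.tendsto.mono_left (nhdsWithin_le_nhds (s := Iio ε))) ?_
  filter_upwards [Ioo_mem_nhdsLT hε] with ε' hε' using h ε' hε'

/-- A Halanay-type comparison principle. At the first time `t` at which `‖p‖` touches an envelope
`K e^{-ε s}` that bounds it on the whole delay window `[-r, t]`, some coordinate `± p i` touches it
too; `hbarrier` says that this coordinate then decays strictly faster than the envelope, which is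
impossible. -/
theorem norm_le_mul_exp_of_barrier {ι : Type*} [Fintype ι] {p p' : ℝ → ι → ℝ} {ε r B : ℝ}
    (hε : 0 ≤ ε) (hr : 0 ≤ r) (hp : ∀ t, HasDerivAt p (p' t) t)
    (hinit : ∀ s ∈ Icc (-r) 0, ‖p s‖ ≤ B)
    (hbarrier : ∀ t ≥ 0, ∀ K > 0, (∀ s ∈ Icc (-r) t, ‖p s‖ ≤ K * exp (-ε * s)) →
      ∀ i σ, (σ = 1 ∨ σ = -1) → σ * p t i = K * exp (-ε * t) →
        σ * p' t i + ε * (K * exp (-ε * t)) < 0)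
    {t : ℝ} (ht : 0 ≤ t) : ‖p t‖ ≤ B * exp (-ε * t) := by
  by_contra! hlt
  set ρ : ℝ → ℝ := fun s => exp (ε * s) * ‖p s‖
  have hpc : Continuous p := continuous_iff_continuousAt.2 fun s => (hp s).continuousAt
  have hρ : Continuous ρ := by fun_prop
  have hB0 : ‖p 0‖ ≤ B := hinit 0 ⟨by linarith, le_rfl⟩
  have hρt : B < ρ t := lt_of_not_ge fun h => hlt.not_ge (exp_mul_le_iff_le_mul_exp_neg.1 h)
  obtain ⟨K, hBK, hKt⟩ : ∃ K, B < K ∧ K < ρ t := ⟨(B + ρ t) / 2, by linarith, by linarith⟩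
  obtain ⟨c, ⟨hc0, -⟩, hρc, hbelow⟩ :=
    exists_first_hit hρ ht (by simpa [ρ] using hB0.trans_lt hBK) hKt.le
  have hK : 0 < K := (norm_nonneg _).trans_lt (hB0.trans_lt hBK)
  have hwindow : ∀ s ∈ Icc (-r) c, ‖p s‖ ≤ K * exp (-ε * s) := by
    rintro s ⟨hs, hsc⟩
    rcases le_total s 0 with hs0 | hs0
    · calc ‖p s‖ ≤ K * 1 := by linarith [hinit s ⟨hs, hs0⟩]
        _ ≤ K * exp (-ε * s) := by gcongr; exact one_le_exp (by nlinarith)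
    · exact exp_mul_le_iff_le_mul_exp_neg.1 (hbelow s ⟨hs0, hsc⟩)
  have hnorm : ‖p c‖ = K * exp (-ε * c) := by
    rw [← hρc, mul_comm, ← mul_assoc, ← exp_add]; simp
  obtain ⟨i, σ, hσ, hatt⟩ := exists_sign_mul_eq_norm (hnorm ▸ mul_pos hK (exp_pos _))
  rw [hnorm] at hatt
  refine (hbarrier c hc0.le K hK hwindow i σ hσ hatt).not_ge ?_
  refine add_nonneg_of_le_exp_envelope ((hasDerivAt_pi.1 (hp c) i).const_mul σ) hc0
    (fun s hs => ?_) hatt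
  calc σ * p s i ≤ |p s i| := sign_mul_le_abs hσ _
    _ ≤ ‖p s‖ := by simpa using norm_le_pi_norm (p s) i
    _ ≤ K * exp (-ε * s) := hwindow s ⟨by linarith [hs.1], hs.2.le⟩

end Barrier

section Row

variable {n : ℕ} (δ : ℝ) (c₁ c₂ e₁ e₂ : Fin n → ℝ) (f₁ f₂ g₁ g₂ : Fin n → ℝ → ℝ → ℝ)

/-- Row `j` of the right-hand side without its input: `X` are the coordinates of the kind the
row governs, `Y` those of the other kind, `Xd` and `Yd` their delayed values. A real row of the
network is `rowField (d j) (aR j) (-aI j) (bR j) (-bI j) fR fI gR gI` with `X = zR`; an imaginary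
row is `rowField (d j) (aR j) (aI j) (bR j) (bI j)` applied to `fI, fR, gI, gR` with swapped
arguments and `X = zI`, so that in both cases the row's own coordinate comes first. -/
def rowField (j : Fin n) (X Y Xd Yd : Fin n → ℝ) : ℝ :=
  -δ * X j + ∑ k, (c₁ k * f₁ k (X k) (Y k) + c₂ k * f₂ k (X k) (Y k))
    + ∑ k, (e₁ k * g₁ k (Xd k) (Yd k) + e₂ k * g₂ k (Xd k) (Yd k))

/-- The left-hand side of the paper's conditions (i) and (ii), in the coordinates of
`rowField`. -/
noncomputable def rowMargin (ξ φ τ l₁x l₁y l₂x l₂y m₁x m₁y m₂x m₂y : Fin n → ℝ) (ε : ℝ)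
    (j : Fin n) : ℝ :=
  ξ j * (-δ + ε + max (c₁ j) 0 * l₁x j + max (c₂ j) 0 * l₂x j)
    + ∑ k ∈ univ.erase j, ξ k * |c₁ k| * l₁x k + ∑ k, φ k * |c₁ k| * l₁y k
    + ∑ k ∈ univ.erase j, ξ k * |c₂ k| * l₂x k + ∑ k, φ k * |c₂ k| * l₂y k
    + ∑ k, (ξ k * |e₁ k| * m₁x k + φ k * |e₁ k| * m₁y k
        + ξ k * |e₂ k| * m₂x k + φ k * |e₂ k| * m₂y k) * exp (ε * τ k)

lemma rowField_sub (j : Fin n) (X Y Xd Yd X' Y' Xd' Yd' : Fin n → ℝ) :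
    rowField δ c₁ c₂ e₁ e₂ f₁ f₂ g₁ g₂ j X Y Xd Yd
      - rowField δ c₁ c₂ e₁ e₂ f₁ f₂ g₁ g₂ j X' Y' Xd' Yd' =
    -δ * (X j - X' j)
      + ∑ k, (c₁ k * (f₁ k (X k) (Y k) - f₁ k (X' k) (Y' k))
          + c₂ k * (f₂ k (X k) (Y k) - f₂ k (X' k) (Y' k)))
      + ∑ k, (e₁ k * (g₁ k (Xd k) (Yd k) - g₁ k (Xd' k) (Yd' k))
          + e₂ k * (g₂ k (Xd k) (Yd k) - g₂ k (Xd' k) (Yd' k))) := by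
  simp only [rowField, mul_sub, ← sum_sub_distrib, add_sub_add_comm]

variable {δ c₁ c₂ e₁ e₂ f₁ f₂ g₁ g₂}
variable {ξ φ τ l₁x l₁y l₂x l₂y m₁x m₁y m₂x m₂y : Fin n → ℝ} {σ P : ℝ}
  {X Y Xd Yd X' Y' Xd' Yd' : Fin n → ℝ}

lemma sign_mul_coupling_le (hf₁ : ∀ k, SepLipschitz (f₁ k) (l₁x k) (l₁y k))
    (hf₂ : ∀ k, SepLipschitz (f₂ k) (l₂x k) (l₂y k))
    (hmono₁ : ∀ k y, Monotone fun x => f₁ k x y) (hmono₂ : ∀ k y, Monotone fun x => f₂ k x y)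
    (hσ : σ = 1 ∨ σ = -1) (j : Fin n) (hX : ∀ k, |X k - X' k| ≤ ξ k * P)
    (hY : ∀ k, |Y k - Y' k| ≤ φ k * P) (hatt : σ * (X j - X' j) = ξ j * P) :
    σ * ∑ k, (c₁ k * (f₁ k (X k) (Y k) - f₁ k (X' k) (Y' k))
        + c₂ k * (f₂ k (X k) (Y k) - f₂ k (X' k) (Y' k)))
      ≤ (ξ j * (max (c₁ j) 0 * l₁x j + max (c₂ j) 0 * l₂x j)
          + ∑ k ∈ univ.erase j, ξ k * |c₁ k| * l₁x k + ∑ k, φ k * |c₁ k| * l₁y k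
          + ∑ k ∈ univ.erase j, ξ k * |c₂ k| * l₂x k + ∑ k, φ k * |c₂ k| * l₂y k) * P := by
  have hσ1 : |σ| = 1 := by rcases hσ with rfl | rfl <;> simp
  have habs : |X j - X' j| = ξ j * P := by
    have := congrArg abs hatt
    rwa [abs_mul, hσ1, one_mul, abs_of_nonneg ((abs_nonneg _).trans (hX j))] at this
  have hsign : σ * (X j - X' j) = |X j - X' j| := hatt.trans habs.symm
  have hdiag := add_le_add (sign_mul_sub_le_of_monotone (hf₁ j) (hmono₁ j) hσ (c₁ j) hsign (hY j))
    (sign_mul_sub_le_of_monotone (hf₂ j) (hmono₂ j) hσ (c₂ j) hsign (hY j))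
  have hoff : ∑ k ∈ univ.erase j, σ * (c₁ k * (f₁ k (X k) (Y k) - f₁ k (X' k) (Y' k))
        + c₂ k * (f₂ k (X k) (Y k) - f₂ k (X' k) (Y' k)))
      ≤ ∑ k ∈ univ.erase j, (ξ k * |c₁ k| * l₁x k * P + φ k * |c₁ k| * l₁y k * P
          + ξ k * |c₂ k| * l₂x k * P + φ k * |c₂ k| * l₂y k * P) := by
    refine sum_le_sum fun k _ => ?_
    rw [mul_add]
    refine (add_le_add (sign_mul_sub_le_of_sepLipschitz (hf₁ k) hσ (c₁ k) (hX k) (hY k))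
      (sign_mul_sub_le_of_sepLipschitz (hf₂ k) hσ (c₂ k) (hX k) (hY k))).trans_eq ?_
    ring
  rw [mul_sum, ← add_sum_erase _ _ (mem_univ j), ← add_sum_erase _ _ (mem_univ j),
    ← add_sum_erase _ (fun k => φ k * |c₂ k| * l₂y k) (mem_univ j)]
  simp only [sum_add_distrib, ← sum_mul] at hoff
  rw [habs] at hdiag
  nlinarith [hdiag, hoff]

lemma sign_mul_delayed_le (hg₁ : ∀ k, SepLipschitz (g₁ k) (m₁x k) (m₁y k))
    (hg₂ : ∀ k, SepLipschitz (g₂ k) (m₂x k) (m₂y k)) (hσ : σ = 1 ∨ σ = -1)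
    (hξ : ∀ k, 0 < ξ k) (hφ : ∀ k, 0 < φ k) (hτ : ∀ k, 0 ≤ τ k) (hP : 0 ≤ P) {ε ε' : ℝ}
    (hε' : ε' ≤ ε) (hXd : ∀ k, |Xd k - Xd' k| ≤ ξ k * P * exp (ε' * τ k))
    (hYd : ∀ k, |Yd k - Yd' k| ≤ φ k * P * exp (ε' * τ k)) :
    σ * ∑ k, (e₁ k * (g₁ k (Xd k) (Yd k) - g₁ k (Xd' k) (Yd' k))
        + e₂ k * (g₂ k (Xd k) (Yd k) - g₂ k (Xd' k) (Yd' k)))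
      ≤ (∑ k, (ξ k * |e₁ k| * m₁x k + φ k * |e₁ k| * m₁y k
          + ξ k * |e₂ k| * m₂x k + φ k * |e₂ k| * m₂y k) * exp (ε * τ k)) * P := by
  rw [mul_sum, sum_mul]
  refine sum_le_sum fun k _ => ?_
  have hcoef : 0 ≤ ξ k * |e₁ k| * m₁x k + φ k * |e₁ k| * m₁y k
      + ξ k * |e₂ k| * m₂x k + φ k * |e₂ k| * m₂y k := by
    have := (hg₁ k).nonneg_left; have := (hg₁ k).nonneg_right
    have := (hg₂ k).nonneg_left; have := (hg₂ k).nonneg_right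
    have := (hξ k).le; have := (hφ k).le
    positivity
  rw [mul_add]
  calc _ ≤ _ := add_le_add (sign_mul_sub_le_of_sepLipschitz (hg₁ k) hσ (e₁ k) (hXd k) (hYd k))
        (sign_mul_sub_le_of_sepLipschitz (hg₂ k) hσ (e₂ k) (hXd k) (hYd k))
    _ = (ξ k * |e₁ k| * m₁x k + φ k * |e₁ k| * m₁y k
          + ξ k * |e₂ k| * m₂x k + φ k * |e₂ k| * m₂y k) * exp (ε' * τ k) * P := by ring
    _ ≤ _ := by gcongr; exact hτ k

theorem sign_mul_rowField_sub_add_lt (hf₁ : ∀ k, SepLipschitz (f₁ k) (l₁x k) (l₁y k))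
    (hf₂ : ∀ k, SepLipschitz (f₂ k) (l₂x k) (l₂y k))
    (hmono₁ : ∀ k y, Monotone fun x => f₁ k x y) (hmono₂ : ∀ k y, Monotone fun x => f₂ k x y)
    (hg₁ : ∀ k, SepLipschitz (g₁ k) (m₁x k) (m₁y k))
    (hg₂ : ∀ k, SepLipschitz (g₂ k) (m₂x k) (m₂y k))
    (hξ : ∀ k, 0 < ξ k) (hφ : ∀ k, 0 < φ k) (hτ : ∀ k, 0 ≤ τ k) {ε ε' : ℝ} (j : Fin n)
    (hmargin : rowMargin δ c₁ c₂ e₁ e₂ ξ φ τ l₁x l₁y l₂x l₂y m₁x m₁y m₂x m₂y ε j ≤ 0)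
    (hε' : ε' < ε) (hP : 0 < P) (hX : ∀ k, |X k - X' k| ≤ ξ k * P)
    (hY : ∀ k, |Y k - Y' k| ≤ φ k * P) (hXd : ∀ k, |Xd k - Xd' k| ≤ ξ k * P * exp (ε' * τ k))
    (hYd : ∀ k, |Yd k - Yd' k| ≤ φ k * P * exp (ε' * τ k)) (hσ : σ = 1 ∨ σ = -1)
    (hatt : σ * (X j - X' j) = ξ j * P) :
    σ * (rowField δ c₁ c₂ e₁ e₂ f₁ f₂ g₁ g₂ j X Y Xd Yd
        - rowField δ c₁ c₂ e₁ e₂ f₁ f₂ g₁ g₂ j X' Y' Xd' Yd') + ε' * (ξ j * P) < 0 := by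
  have hinst := sign_mul_coupling_le (c₁ := c₁) (c₂ := c₂) hf₁ hf₂ hmono₁ hmono₂ hσ j hX hY hatt
  have hdel := sign_mul_delayed_le (e₁ := e₁) (e₂ := e₂) hg₁ hg₂ hσ hξ hφ hτ hP.le hε'.le hXd hYd
  have hgap : 0 < (ε - ε') * (ξ j * P) := mul_pos (sub_pos.2 hε') (mul_pos (hξ j) hP)
  have hmarginP := mul_nonpos_of_nonpos_of_nonneg hmargin hP.le
  rw [rowField_sub, mul_add, mul_add, mul_left_comm, hatt]
  unfold rowMargin at hmarginP
  nlinarith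

lemma rowField_barrier (hf₁ : ∀ k, SepLipschitz (f₁ k) (l₁x k) (l₁y k))
    (hf₂ : ∀ k, SepLipschitz (f₂ k) (l₂x k) (l₂y k))
    (hmono₁ : ∀ k y, Monotone fun x => f₁ k x y) (hmono₂ : ∀ k y, Monotone fun x => f₂ k x y)
    (hg₁ : ∀ k, SepLipschitz (g₁ k) (m₁x k) (m₁y k))
    (hg₂ : ∀ k, SepLipschitz (g₂ k) (m₂x k) (m₂y k))
    (hξ : ∀ k, 0 < ξ k) (hφ : ∀ k, 0 < φ k) (hτ : ∀ k, 0 ≤ τ k) {ε ε' r t K σ dx dx' : ℝ}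
    (j : Fin n) (hmargin : rowMargin δ c₁ c₂ e₁ e₂ ξ φ τ l₁x l₁y l₂x l₂y m₁x m₁y m₂x m₂y ε j ≤ 0)
    (hε' : ε' < ε) (hτr : ∀ k, τ k ≤ r) (ht : 0 ≤ t) (hK : 0 < K)
    {x y x' y' : Fin n → ℝ → ℝ}
    (hwin : ∀ s ∈ Icc (-r) t, (∀ k, (ξ k)⁻¹ * |x k s - x' k s| ≤ K * exp (-ε' * s)) ∧
      (∀ k, (φ k)⁻¹ * |y k s - y' k s| ≤ K * exp (-ε' * s)))
    (hderiv : dx - dx' =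
      rowField δ c₁ c₂ e₁ e₂ f₁ f₂ g₁ g₂ j (fun k => x k t) (fun k => y k t)
          (fun k => x k (t - τ k)) (fun k => y k (t - τ k))
        - rowField δ c₁ c₂ e₁ e₂ f₁ f₂ g₁ g₂ j (fun k => x' k t) (fun k => y' k t)
          (fun k => x' k (t - τ k)) (fun k => y' k (t - τ k)))
    (hσ : σ = 1 ∨ σ = -1) (hatt : σ * ((ξ j)⁻¹ * x j t - (ξ j)⁻¹ * x' j t) = K * exp (-ε' * t)) :
    σ * ((ξ j)⁻¹ * dx - (ξ j)⁻¹ * dx') + ε' * (K * exp (-ε' * t)) < 0 := by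
  have hwin' : ∀ s ∈ Icc (-r) t, ∀ k, |x k s - x' k s| ≤ ξ k * (K * exp (-ε' * s)) ∧
      |y k s - y' k s| ≤ φ k * (K * exp (-ε' * s)) := fun s hs k =>
    ⟨(inv_mul_le_iff₀ (hξ k)).1 ((hwin s hs).1 k), (inv_mul_le_iff₀ (hφ k)).1 ((hwin s hs).2 k)⟩
  have hdelay : ∀ k, t - τ k ∈ Icc (-r) t := fun k => ⟨by linarith [hτr k], by linarith [hτ k]⟩
  have hshift : ∀ k, exp (-ε' * (t - τ k)) = exp (-ε' * t) * exp (ε' * τ k) := fun k => by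
    rw [← exp_add]; ring_nf
  have hP : 0 < K * exp (-ε' * t) := mul_pos hK (exp_pos _)
  have hrow := sign_mul_rowField_sub_add_lt hf₁ hf₂ hmono₁ hmono₂ hg₁ hg₂ hξ hφ hτ j hmargin hε'
    hP (fun k => (hwin' t ⟨(hdelay k).1.trans (hdelay k).2, le_rfl⟩ k).1)
    (fun k => (hwin' t ⟨(hdelay k).1.trans (hdelay k).2, le_rfl⟩ k).2)
    (fun k => ((hwin' _ (hdelay k) k).1).trans_eq (by rw [hshift]; ring))
    (fun k => ((hwin' _ (hdelay k) k).2).trans_eq (by rw [hshift]; ring)) hσ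
    (by rw [← hatt]; field_simp [(hξ j).ne'])
  rw [← hderiv] at hrow
  have hξj := inv_pos.2 (hξ j)
  calc σ * ((ξ j)⁻¹ * dx - (ξ j)⁻¹ * dx') + ε' * (K * exp (-ε' * t))
      = (ξ j)⁻¹ * (σ * (dx - dx') + ε' * (ξ j * (K * exp (-ε' * t)))) := by
        field_simp [(hξ j).ne']
    _ < 0 := mul_neg_of_pos_of_neg hξj hrow

end Row

lemma tendsto_rowField {α : Type*} {l : Filter α} {n : ℕ} {δ : ℝ} {c₁ c₂ e₁ e₂ : Fin n → ℝ}
    {f₁ f₂ g₁ g₂ : Fin n → ℝ → ℝ → ℝ} (hf₁ : ∀ k, Continuous (Function.uncurry (f₁ k)))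
    (hf₂ : ∀ k, Continuous (Function.uncurry (f₂ k)))
    (hg₁ : ∀ k, Continuous (Function.uncurry (g₁ k)))
    (hg₂ : ∀ k, Continuous (Function.uncurry (g₂ k))) {X Y Xd Yd : α → Fin n → ℝ}
    {X₀ Y₀ Xd₀ Yd₀ : Fin n → ℝ} (hX : ∀ k, Tendsto (X · k) l (𝓝 (X₀ k)))
    (hY : ∀ k, Tendsto (Y · k) l (𝓝 (Y₀ k))) (hXd : ∀ k, Tendsto (Xd · k) l (𝓝 (Xd₀ k)))
    (hYd : ∀ k, Tendsto (Yd · k) l (𝓝 (Yd₀ k))) (j : Fin n) :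
    Tendsto (fun a => rowField δ c₁ c₂ e₁ e₂ f₁ f₂ g₁ g₂ j (X a) (Y a) (Xd a) (Yd a)) l
      (𝓝 (rowField δ c₁ c₂ e₁ e₂ f₁ f₂ g₁ g₂ j X₀ Y₀ Xd₀ Yd₀)) := by
  have hF : ∀ {F : Fin n → ℝ → ℝ → ℝ}, (∀ k, Continuous (Function.uncurry (F k))) →
      ∀ {U V : α → Fin n → ℝ} {U₀ V₀ : Fin n → ℝ}, (∀ k, Tendsto (U · k) l (𝓝 (U₀ k))) →
        (∀ k, Tendsto (V · k) l (𝓝 (V₀ k))) → ∀ k,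
          Tendsto (fun a => F k (U a k) (V a k)) l (𝓝 (F k (U₀ k) (V₀ k))) :=
    fun hF _ _ _ _ hU hV k => ((hF k).tendsto _).comp ((hU k).prodMk_nhds (hV k))
  refine (((hX j).const_mul _).add (tendsto_finsetSum _ fun k _ => ?_)).add
    (tendsto_finsetSum _ fun k _ => ?_)
  · exact ((hF hf₁ hX hY k).const_mul _).add ((hF hf₂ hX hY k).const_mul _)
  · exact ((hF hg₁ hXd hYd k).const_mul _).add ((hF hg₂ hXd hYd k).const_mul _)

section Network

variable {n : ℕ}

/-- The rescaled state `(ξ⁻¹ zR, φ⁻¹ zI)`: its sup norm is the paper's `‖Z(t)‖_{ξ,∞}`. -/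
noncomputable def scaled (ξ φ : Fin n → ℝ) (zR zI : Fin n → ℝ → ℝ) (t : ℝ) : Fin n ⊕ Fin n → ℝ :=
  Sum.elim (fun j => (ξ j)⁻¹ * zR j t) (fun j => (φ j)⁻¹ * zI j t)

section Scaled

variable {ξ φ : Fin n → ℝ} {zR zI wR wI : Fin n → ℝ → ℝ} {t : ℝ}

lemma scaled_sub :
    scaled ξ φ zR zI t - scaled ξ φ wR wI t = scaled ξ φ (zR - wR) (zI - wI) t := by
  ext (j | j) <;> simp [scaled, mul_sub]

lemma norm_scaled_le_iff (hξ : ∀ j, 0 < ξ j) (hφ : ∀ j, 0 < φ j) {C : ℝ} (hC : 0 ≤ C) :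
    ‖scaled ξ φ zR zI t‖ ≤ C ↔
      (∀ j, (ξ j)⁻¹ * |zR j t| ≤ C) ∧ (∀ j, (φ j)⁻¹ * |zI j t| ≤ C) := by
  simp [pi_norm_le_iff_of_nonneg hC, Sum.forall, scaled, abs_mul, abs_of_pos (hξ _),
    abs_of_pos (hφ _)]

lemma hasDerivAt_scaled (hR : ∀ j, DifferentiableAt ℝ (zR j) t)
    (hI : ∀ j, DifferentiableAt ℝ (zI j) t) :
    HasDerivAt (scaled ξ φ zR zI)
      (scaled ξ φ (fun j => deriv (zR j)) (fun j => deriv (zI j)) t) t :=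
  hasDerivAt_pi.2 fun
    | .inl j => (hR j).hasDerivAt.const_mul _
    | .inr j => (hI j).hasDerivAt.const_mul _

end Scaled

variable {d : Fin n → ℝ} {aR aI bR bI τ : Fin n → Fin n → ℝ} {uR uI : Fin n → ℝ}
  {fR fI gR gI : Fin n → ℝ → ℝ → ℝ} {zR zI : Fin n → ℝ → ℝ}

lemma IsSolution.deriv_re (hz : IsSolution n d aR aI bR bI τ uR uI fR fI gR gI zR zI) {t : ℝ}
    (ht : 0 ≤ t) (j : Fin n) :
    deriv (zR j) t =
      rowField (d j) (aR j) (fun k => -aI j k) (bR j) (fun k => -bI j k) fR fI gR gI j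
        (fun k => zR k t) (fun k => zI k t) (fun k => zR k (t - τ j k))
        (fun k => zI k (t - τ j k)) + uR j := by
  rw [hz.2.2.1 j t ht]
  simp only [rowField, neg_mul, ← sub_eq_add_neg]

lemma IsSolution.deriv_im (hz : IsSolution n d aR aI bR bI τ uR uI fR fI gR gI zR zI) {t : ℝ}
    (ht : 0 ≤ t) (j : Fin n) :
    deriv (zI j) t =
      rowField (d j) (aR j) (aI j) (bR j) (bI j) (fun k x y => fI k y x) (fun k x y => fR k y x)
        (fun k x y => gI k y x) (fun k x y => gR k y x) j
        (fun k => zI k t) (fun k => zR k t) (fun k => zI k (t - τ j k))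
        (fun k => zR k (t - τ j k)) + uI j := by
  rw [hz.2.2.2 j t ht]
  rfl

lemma IsSolution.hasDerivAt_scaled (hz : IsSolution n d aR aI bR bI τ uR uI fR fI gR gI zR zI)
    (ξ φ : Fin n → ℝ) (t : ℝ) :
    HasDerivAt (scaled ξ φ zR zI)
      (scaled ξ φ (fun j => deriv (zR j)) (fun j => deriv (zI j)) t) t :=
  _root_.hasDerivAt_scaled (fun j => (hz.1 j).differentiable one_ne_zero t)
    (fun j => (hz.2.1 j).differentiable one_ne_zero t)

lemma IsSolution.comp_add (hz : IsSolution n d aR aI bR bI τ uR uI fR fI gR gI zR zI) {h : ℝ}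
    (hh : 0 ≤ h) :
    IsSolution n d aR aI bR bI τ uR uI fR fI gR gI (fun j s => zR j (s + h))
      (fun j s => zI j (s + h)) := by
  refine ⟨fun j => (hz.1 j).comp (contDiff_id.add contDiff_const),
    fun j => (hz.2.1 j).comp (contDiff_id.add contDiff_const), fun j t ht => ?_,
    fun j t ht => ?_⟩
  · simpa only [deriv_comp_add_const, sub_add_eq_add_sub] using hz.2.2.1 j (t + h) (by linarith)
  · simpa only [deriv_comp_add_const, sub_add_eq_add_sub] using hz.2.2.2 j (t + h) (by linarith)

lemma IsEquilibrium.isSolution {zbR zbI : Fin n → ℝ}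
    (h : IsEquilibrium n d aR aI bR bI uR uI fR fI gR gI zbR zbI) :
    IsSolution n d aR aI bR bI τ uR uI fR fI gR gI (fun j _ => zbR j) (fun j _ => zbI j) :=
  ⟨fun _ => contDiff_const, fun _ => contDiff_const, fun j _ _ => by simpa using (h.1 j).symm,
    fun j _ _ => by simpa using (h.2 j).symm⟩

def ExpContracting (n : ℕ) (d : Fin n → ℝ) (aR aI bR bI τ : Fin n → Fin n → ℝ)
    (uR uI : Fin n → ℝ) (fR fI gR gI : Fin n → ℝ → ℝ → ℝ) (ξ φ : Fin n → ℝ) (ε r : ℝ) : Prop :=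
  ∀ ⦃zR zI wR wI : Fin n → ℝ → ℝ⦄, IsSolution n d aR aI bR bI τ uR uI fR fI gR gI zR zI →
    IsSolution n d aR aI bR bI τ uR uI fR fI gR gI wR wI → ∀ ⦃B : ℝ⦄,
    (∀ s ∈ Icc (-r) 0, ‖scaled ξ φ zR zI s - scaled ξ φ wR wI s‖ ≤ B) →
    ∀ ⦃t : ℝ⦄, 0 ≤ t → ‖scaled ξ φ zR zI t - scaled ξ φ wR wI t‖ ≤ B * exp (-ε * t)

theorem expContracting_of_rowMargin (hτ : ∀ j k, 0 ≤ τ j k)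
    {lRR lRI lIR lII mRR mRI mIR mII : Fin n → ℝ}
    (hf : ∀ j, CondH1 (fR j) (fI j) (lRR j) (lRI j) (lIR j) (lII j))
    (hg : ∀ j, CondH2 (gR j) (gI j) (mRR j) (mRI j) (mIR j) (mII j))
    {ξ φ : Fin n → ℝ} (hξ : ∀ j, 0 < ξ j) (hφ : ∀ j, 0 < φ j) {ε : ℝ} (hε : 0 < ε)
    (hmR : ∀ j, rowMargin (d j) (aR j) (fun k => -aI j k) (bR j) (fun k => -bI j k) ξ φ (τ j)
      lRR lRI lIR lII mRR mRI mIR mII ε j ≤ 0)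
    (hmI : ∀ j, rowMargin (d j) (aR j) (aI j) (bR j) (bI j) φ ξ (τ j)
      lII lIR lRI lRR mII mIR mRI mRR ε j ≤ 0)
    {r : ℝ} (hr0 : 0 ≤ r) (hr : ∀ j k, τ j k ≤ r) :
    ExpContracting n d aR aI bR bI τ uR uI fR fI gR gI ξ φ ε r := by
  intro zR zI wR wI hz hw B hinit t ht
  refine le_mul_exp_of_forall_lt hε fun ε' hε' => norm_le_mul_exp_of_barrier hε'.1.le hr0
    (fun s => (hz.hasDerivAt_scaled ξ φ s).sub (hw.hasDerivAt_scaled ξ φ s)) hinit ?_ ht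
  intro t ht K hK hwin i σ hσ hatt
  have hwin' : ∀ s ∈ Icc (-r) t,
      (∀ k, (ξ k)⁻¹ * |zR k s - wR k s| ≤ K * exp (-ε' * s)) ∧
      (∀ k, (φ k)⁻¹ * |zI k s - wI k s| ≤ K * exp (-ε' * s)) := fun s hs => by
    have h := hwin s hs
    rw [Pi.sub_apply, scaled_sub, norm_scaled_le_iff hξ hφ (by positivity)] at h
    simpa using h
  rcases i with j | j
  · exact rowField_barrier (fun k => (hf k).fst_sepLipschitz) (fun k => (hf k).snd_sepLipschitz)
      (fun k => (hf k).fst_monotone_left) (fun k => (hf k).snd_monotone_left)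
      (fun k => (hg k).fst_sepLipschitz) (fun k => (hg k).snd_sepLipschitz) hξ hφ (hτ j) j
      (hmR j) hε'.2 (hr j) ht hK hwin' (by dsimp only; rw [hz.deriv_re ht, hw.deriv_re ht]; ring)
      hσ hatt
  · exact rowField_barrier (fun k => (hf k).snd_sepLipschitz.swap)
      (fun k => (hf k).fst_sepLipschitz.swap)
      (fun k => (hf k).snd_monotone_right) (fun k => (hf k).fst_monotone_right)
      (fun k => (hg k).snd_sepLipschitz.swap) (fun k => (hg k).fst_sepLipschitz.swap) hφ hξ
      (hτ j) j (hmI j) hε'.2 (hr j) ht hK (fun s hs => (hwin' s hs).symm)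
      (by dsimp only; rw [hz.deriv_im ht, hw.deriv_im ht]; ring) hσ hatt

end Network

lemma tendsto_zero_of_abs_le_exp {u : ℝ → ℝ} {C ε : ℝ} (hε : 0 < ε)
    (h : ∀ t ≥ 0, |u t| ≤ C * exp (-ε * t)) : Tendsto u atTop (𝓝 0) := by
  have hexp : Tendsto (fun t => C * exp (-ε * t)) atTop (𝓝 0) := by
    simpa [neg_mul] using
      (tendsto_exp_neg_atTop_nhds_zero.comp (tendsto_id.const_mul_atTop hε)).const_mul C
  exact squeeze_zero_norm' (by filter_upwards [eventually_ge_atTop 0] with t ht using h t ht) hexp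

lemma exists_tendsto_of_abs_deriv_le {u : ℝ → ℝ} {C ε : ℝ} (hu : Differentiable ℝ u)
    (hε : 0 < ε) (h : ∀ t ≥ 0, |deriv u t| ≤ C * exp (-ε * t)) :
    ∃ L, Tendsto u atTop (𝓝 L) := by
  refine ⟨_, MeasureTheory.tendsto_limUnder_of_hasDerivAt_of_integrableOn_Ioi (a := 0)
    (fun x _ => (hu x).hasDerivAt) ?_⟩
  exact ((exp_neg_integrableOn_Ioi 0 hε).const_mul C).mono'
    (measurable_deriv u).aestronglyMeasurable
    (MeasureTheory.ae_restrict_of_forall_mem measurableSet_Ioi fun t ht => h t (le_of_lt ht))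

lemma tendsto_sub_const_atTop (c : ℝ) : Tendsto (fun t : ℝ => t - c) atTop atTop :=
  (tendsto_atTop_add_const_right atTop (-c) tendsto_id).congr fun t => (sub_eq_add_neg t c).symm

lemma Continuous.uncurry_swap {f : ℝ → ℝ → ℝ} (hf : Continuous (Function.uncurry f)) :
    Continuous (Function.uncurry fun x y => f y x) :=
  hf.comp continuous_swap

section Consequences

variable {n : ℕ} {d : Fin n → ℝ} {aR aI bR bI τ : Fin n → Fin n → ℝ} {uR uI : Fin n → ℝ}
  {fR fI gR gI : Fin n → ℝ → ℝ → ℝ} {ξ φ : Fin n → ℝ} {ε r : ℝ} {zR zI : Fin n → ℝ → ℝ}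

lemma isEquilibrium_of_rowField {zbR zbI : Fin n → ℝ}
    (hR : ∀ j, rowField (d j) (aR j) (fun k => -aI j k) (bR j) (fun k => -bI j k) fR fI gR gI j
      zbR zbI zbR zbI + uR j = 0)
    (hI : ∀ j, rowField (d j) (aR j) (aI j) (bR j) (bI j) (fun k x y => fI k y x)
      (fun k x y => fR k y x) (fun k x y => gI k y x) (fun k x y => gR k y x) j
      zbI zbR zbI zbR + uI j = 0) :
    IsEquilibrium n d aR aI bR bI uR uI fR fI gR gI zbR zbI :=
  ⟨fun j => by simpa only [rowField, neg_mul, ← sub_eq_add_neg] using hR j, hI⟩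

lemma IsSolution.continuous_scaled (hz : IsSolution n d aR aI bR bI τ uR uI fR fI gR gI zR zI) :
    Continuous (scaled ξ φ zR zI) :=
  continuous_iff_continuousAt.2 fun t => (hz.hasDerivAt_scaled ξ φ t).continuousAt

/-- Comparing a solution with its own time shifts bounds its velocity. -/
theorem ExpContracting.exists_norm_scaled_deriv_le
    (H : ExpContracting n d aR aI bR bI τ uR uI fR fI gR gI ξ φ ε r)
    (hz : IsSolution n d aR aI bR bI τ uR uI fR fI gR gI zR zI) :
    ∃ C, ∀ t ≥ 0,
      ‖scaled ξ φ (fun j => deriv (zR j)) (fun j => deriv (zI j)) t‖ ≤ C * exp (-ε * t) := by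
  have hcont : Continuous (scaled ξ φ (fun j => deriv (zR j)) (fun j => deriv (zI j))) :=
    continuous_pi fun
      | .inl j => continuous_const.mul ((hz.1 j).continuous_deriv le_rfl)
      | .inr j => continuous_const.mul ((hz.2.1 j).continuous_deriv le_rfl)
  obtain ⟨C, hC⟩ :=
    (isCompact_Icc (a := -r) (b := 1)).exists_bound_of_continuousOn hcont.continuousOn
  refine ⟨C, fun t ht => ?_⟩
  have hslope : ∀ h ∈ Ioc (0 : ℝ) 1,
      ‖h⁻¹ • (scaled ξ φ zR zI (t + h) - scaled ξ φ zR zI t)‖ ≤ C * exp (-ε * t) := by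
    rintro h ⟨hh0, hh1⟩
    have hinit : ∀ s ∈ Icc (-r) 0, ‖scaled ξ φ zR zI (s + h) - scaled ξ φ zR zI s‖ ≤ C * h :=
      fun s hs => by
        simpa [abs_of_pos hh0] using (convex_Icc (-r) 1).norm_image_sub_le_of_norm_hasDerivWithin_le
          (x := s) (y := s + h) (fun x _ => (hz.hasDerivAt_scaled ξ φ x).hasDerivWithinAt) hC
          ⟨hs.1, by linarith [hs.2]⟩ ⟨by linarith [hs.1], by linarith [hs.2]⟩
    rw [norm_smul, norm_inv, Real.norm_of_nonneg hh0.le]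
    calc h⁻¹ * ‖scaled ξ φ zR zI (t + h) - scaled ξ φ zR zI t‖
        ≤ h⁻¹ * (C * h * exp (-ε * t)) := by gcongr; exact H (hz.comp_add hh0.le) hz hinit ht
      _ = C * exp (-ε * t) := by field_simp
  exact le_of_tendsto (hz.hasDerivAt_scaled ξ φ t).tendsto_slope_zero_right.norm
    (by filter_upwards [Ioc_mem_nhdsGT zero_lt_one] with h hh using hslope h hh)

theorem ExpContracting.exists_isEquilibrium
    (H : ExpContracting n d aR aI bR bI τ uR uI fR fI gR gI ξ φ ε r)
    (hξ : ∀ j, 0 < ξ j) (hφ : ∀ j, 0 < φ j) (hε : 0 < ε)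
    (hf : ∀ j, Continuous (Function.uncurry (fR j)) ∧ Continuous (Function.uncurry (fI j)))
    (hg : ∀ j, Continuous (Function.uncurry (gR j)) ∧ Continuous (Function.uncurry (gI j)))
    (hz : IsSolution n d aR aI bR bI τ uR uI fR fI gR gI zR zI) :
    ∃ zbR zbI, IsEquilibrium n d aR aI bR bI uR uI fR fI gR gI zbR zbI := by
  obtain ⟨C, hC⟩ := H.exists_norm_scaled_deriv_le hz
  have hbound := fun t (ht : 0 ≤ t) => (norm_scaled_le_iff hξ hφ
    ((norm_nonneg _).trans (hC t ht))).1 (hC t ht)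
  have hR : ∀ j t, 0 ≤ t → |deriv (zR j) t| ≤ ξ j * C * exp (-ε * t) := fun j t ht => by
    rw [mul_assoc]; exact (inv_mul_le_iff₀ (hξ j)).1 ((hbound t ht).1 j)
  have hI : ∀ j t, 0 ≤ t → |deriv (zI j) t| ≤ φ j * C * exp (-ε * t) := fun j t ht => by
    rw [mul_assoc]; exact (inv_mul_le_iff₀ (hφ j)).1 ((hbound t ht).2 j)
  choose zbR hzbR using fun j =>
    exists_tendsto_of_abs_deriv_le ((hz.1 j).differentiable one_ne_zero) hε (hR j)
  choose zbI hzbI using fun j =>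
    exists_tendsto_of_abs_deriv_le ((hz.2.1 j).differentiable one_ne_zero) hε (hI j)
  have hdelay : ∀ j k, Tendsto (fun t => t - τ j k) atTop atTop := fun j k =>
    tendsto_sub_const_atTop _
  refine ⟨zbR, zbI, isEquilibrium_of_rowField (fun j => ?_) (fun j => ?_)⟩
  · refine tendsto_nhds_unique ?_ (tendsto_zero_of_abs_le_exp hε (hR j))
    refine ((tendsto_rowField (fun k => (hf k).1) (fun k => (hf k).2) (fun k => (hg k).1)
      (fun k => (hg k).2) hzbR hzbI (fun k => (hzbR k).comp (hdelay j k))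
      (fun k => (hzbI k).comp (hdelay j k)) j).add_const (uR j)).congr' ?_
    filter_upwards [eventually_ge_atTop 0] with t ht using (hz.deriv_re ht j).symm
  · refine tendsto_nhds_unique ?_ (tendsto_zero_of_abs_le_exp hε (hI j))
    refine ((tendsto_rowField (fun k => (hf k).2.uncurry_swap) (fun k => (hf k).1.uncurry_swap)
      (fun k => (hg k).2.uncurry_swap) (fun k => (hg k).1.uncurry_swap) hzbI hzbR
      (fun k => (hzbI k).comp (hdelay j k))
      (fun k => (hzbR k).comp (hdelay j k)) j).add_const (uI j)).congr' ?_
    filter_upwards [eventually_ge_atTop 0] with t ht using (hz.deriv_im ht j).symm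

theorem ExpContracting.eq_of_isEquilibrium
    (H : ExpContracting n d aR aI bR bI τ uR uI fR fI gR gI ξ φ ε r)
    (hξ : ∀ j, 0 < ξ j) (hφ : ∀ j, 0 < φ j) (hε : 0 < ε) {zbR zbI wR wI : Fin n → ℝ}
    (hw : IsEquilibrium n d aR aI bR bI uR uI fR fI gR gI wR wI)
    (hzb : IsEquilibrium n d aR aI bR bI uR uI fR fI gR gI zbR zbI) : wR = zbR ∧ wI = zbI := by
  set D := scaled ξ φ (fun j _ => wR j) (fun j _ => wI j) 0
    - scaled ξ φ (fun j _ => zbR j) (fun j _ => zbI j) 0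
  have hD := H (hw.isSolution (τ := τ)) (hzb.isSolution (τ := τ)) (B := ‖D‖)
    (fun _ _ => le_rfl) zero_le_one
  change ‖D‖ ≤ ‖D‖ * exp (-ε * 1) at hD
  have hexp : exp (-ε * 1) < 1 := exp_lt_one_iff.2 (by linarith)
  have hD0 : D = 0 := norm_le_zero_iff.1 (by nlinarith [norm_nonneg D])
  have hcoord := fun i => congrFun hD0 i
  constructor <;> funext j
  · simpa [D, scaled, sub_eq_zero, (hξ j).ne'] using hcoord (.inl j)
  · simpa [D, scaled, sub_eq_zero, (hφ j).ne'] using hcoord (.inr j)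

theorem ExpContracting.exists_norm_scaled_sub_le
    (H : ExpContracting n d aR aI bR bI τ uR uI fR fI gR gI ξ φ ε r)
    (hz : IsSolution n d aR aI bR bI τ uR uI fR fI gR gI zR zI) {zbR zbI : Fin n → ℝ}
    (hzb : IsEquilibrium n d aR aI bR bI uR uI fR fI gR gI zbR zbI) :
    ∃ B, ∀ t ≥ 0, ‖scaled ξ φ zR zI t - scaled ξ φ (fun j _ => zbR j) (fun j _ => zbI j) t‖
      ≤ B * exp (-ε * t) := by
  obtain ⟨B, hB⟩ := (isCompact_Icc (a := -r) (b := 0)).exists_bound_of_continuousOn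
    ((hz.continuous_scaled (ξ := ξ) (φ := φ)).sub
      ((hzb.isSolution (τ := τ)).continuous_scaled (ξ := ξ) (φ := φ))).continuousOn
  exact ⟨B, fun t ht => H hz hzb.isSolution hB ht⟩

theorem ExpContracting.exists_decay
    (H : ExpContracting n d aR aI bR bI τ uR uI fR fI gR gI ξ φ ε r)
    (hz : IsSolution n d aR aI bR bI τ uR uI fR fI gR gI zR zI) {zbR zbI : Fin n → ℝ}
    (hzb : IsEquilibrium n d aR aI bR bI uR uI fR fI gR gI zbR zbI) :
    ∃ c > 0, ∀ t ≥ 0,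
      ‖scaled ξ φ zR zI t - scaled ξ φ (fun j _ => zbR j) (fun j _ => zbI j) t‖
        ≤ c * exp (-ε * t) ∧
      ‖scaled ξ φ (fun j => deriv (zR j)) (fun j => deriv (zI j)) t‖ ≤ c * exp (-ε * t) := by
  obtain ⟨B, hB⟩ := H.exists_norm_scaled_sub_le hz hzb
  obtain ⟨C, hC⟩ := H.exists_norm_scaled_deriv_le hz
  refine ⟨max (max B C) 1, by positivity, fun t ht => ⟨(hB t ht).trans ?_, (hC t ht).trans ?_⟩⟩
  · gcongr; exact (le_max_left _ _).trans (le_max_left _ _)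
  · gcongr; exact (le_max_right _ _).trans (le_max_left _ _)

end Consequences

theorem stmt0_general
    (n : ℕ)
    (d : Fin n → ℝ)
    (aR aI bR bI τ : Fin n → Fin n → ℝ) (hτ : ∀ j k, 0 ≤ τ j k)
    (uR uI : Fin n → ℝ)
    (fR fI gR gI : Fin n → ℝ → ℝ → ℝ)
    (lRR lRI lIR lII mRR mRI mIR mII : Fin n → ℝ)
    (hf : ∀ j, CondH1 (fR j) (fI j) (lRR j) (lRI j) (lIR j) (lII j))
    (hg : ∀ j, CondH2 (gR j) (gI j) (mRR j) (mRI j) (mIR j) (mII j))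
    (ξ φ : Fin n → ℝ) (hξ : ∀ j, 0 < ξ j) (hφ : ∀ j, 0 < φ j)
    (ε : ℝ) (hε : 0 < ε)
    (hT1 : ∀ j : Fin n,
      ξ j * (-(d j) + ε + max (aR j j) 0 * lRR j + max (-(aI j j)) 0 * lIR j)
      + (∑ k ∈ Finset.univ.erase j, ξ k * |aR j k| * lRR k)
      + (∑ k, φ k * |aR j k| * lRI k)
      + (∑ k ∈ Finset.univ.erase j, ξ k * |aI j k| * lIR k)
      + (∑ k, φ k * |aI j k| * lII k)
      + (∑ k, (ξ k * |bR j k| * mRR k + φ k * |bR j k| * mRI k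
               + ξ k * |bI j k| * mIR k + φ k * |bI j k| * mII k) * Real.exp (ε * τ j k))
      ≤ 0)
    (hT2 : ∀ j : Fin n,
      φ j * (-(d j) + ε + max (aR j j) 0 * lII j + max (aI j j) 0 * lRI j)
      + (∑ k, ξ k * |aR j k| * lIR k)
      + (∑ k ∈ Finset.univ.erase j, φ k * |aR j k| * lII k)
      + (∑ k, ξ k * |aI j k| * lRR k)
      + (∑ k ∈ Finset.univ.erase j, φ k * |aI j k| * lRI k)
      + (∑ k, (ξ k * |bR j k| * mIR k + φ k * |bR j k| * mII k
               + ξ k * |bI j k| * mRR k + φ k * |bI j k| * mRI k) * Real.exp (ε * τ j k))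
      ≤ 0)
    (hsol : ∃ zR zI, IsSolution n d aR aI bR bI τ uR uI fR fI gR gI zR zI) :
    ∃ zbR zbI : Fin n → ℝ,
      IsEquilibrium n d aR aI bR bI uR uI fR fI gR gI zbR zbI ∧
      (∀ wR wI : Fin n → ℝ,
        IsEquilibrium n d aR aI bR bI uR uI fR fI gR gI wR wI → wR = zbR ∧ wI = zbI) ∧
      (∀ zR zI : Fin n → ℝ → ℝ,
        IsSolution n d aR aI bR bI τ uR uI fR fI gR gI zR zI →
        ∃ c : ℝ, 0 < c ∧ ∀ t : ℝ, 0 ≤ t →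
          (∀ j, (ξ j)⁻¹ * |zR j t - zbR j| ≤ c * Real.exp (-ε * t)) ∧
          (∀ j, (φ j)⁻¹ * |zI j t - zbI j| ≤ c * Real.exp (-ε * t)) ∧
          (∀ j, (ξ j)⁻¹ * |deriv (zR j) t| ≤ c * Real.exp (-ε * t)) ∧
          (∀ j, (φ j)⁻¹ * |deriv (zI j) t| ≤ c * Real.exp (-ε * t))) := by
  obtain ⟨r, hr⟩ := Finite.bddAbove_range fun p : Fin n × Fin n => τ p.1 p.2
  have hmR : ∀ j, rowMargin (d j) (aR j) (fun k => -aI j k) (bR j) (fun k => -bI j k) ξ φ (τ j)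
      lRR lRI lIR lII mRR mRI mIR mII ε j ≤ 0 := fun j => by
    simpa only [rowMargin, abs_neg] using hT1 j
  have hmI : ∀ j, rowMargin (d j) (aR j) (aI j) (bR j) (bI j) φ ξ (τ j)
      lII lIR lRI lRR mII mIR mRI mRR ε j ≤ 0 := fun j => by
    have h := hT2 j
    simp only [rowMargin, add_mul, sum_add_distrib] at h ⊢
    linarith
  have H : ExpContracting n d aR aI bR bI τ uR uI fR fI gR gI ξ φ ε (max r 0) :=
    expContracting_of_rowMargin hτ hf hg hξ hφ hε hmR hmI (le_max_right r 0)
      fun j k => (hr ⟨(j, k), rfl⟩).trans (le_max_left r 0)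
  obtain ⟨zR₀, zI₀, hz₀⟩ := hsol
  obtain ⟨zbR, zbI, hzb⟩ := H.exists_isEquilibrium hξ hφ hε
    (fun j => ⟨(hf j).1.continuous, (hf j).2.1.continuous⟩)
    (fun j => ⟨(hg j).1.continuous, (hg j).2.1.continuous⟩) hz₀
  refine ⟨zbR, zbI, hzb, fun wR wI hw => H.eq_of_isEquilibrium hξ hφ hε hw hzb, fun zR zI hz => ?_⟩
  obtain ⟨c, hc, hdecay⟩ := H.exists_decay hz hzb
  refine ⟨c, hc, fun t ht => ?_⟩
  have hpos : 0 ≤ c * exp (-ε * t) := by positivity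
  obtain ⟨h1, h2⟩ := (norm_scaled_le_iff hξ hφ hpos).1 (scaled_sub ▸ (hdecay t ht).1)
  obtain ⟨h3, h4⟩ := (norm_scaled_le_iff hξ hφ hpos).1 (hdecay t ht).2
  exact ⟨h1, h2, h3, h4⟩

theorem stmt0
    (n : ℕ) (hn : 1 ≤ n)
    (d : Fin n → ℝ) (hd : ∀ j, 0 < d j)
    (aR aI bR bI τ : Fin n → Fin n → ℝ) (hτ : ∀ j k, 0 ≤ τ j k)
    (uR uI : Fin n → ℝ)
    (fR fI gR gI : Fin n → ℝ → ℝ → ℝ)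
    (lRR lRI lIR lII mRR mRI mIR mII : Fin n → ℝ)
    (hl : ∀ j, 0 < lRR j ∧ 0 < lRI j ∧ 0 < lIR j ∧ 0 < lII j)
    (hm : ∀ j, 0 < mRR j ∧ 0 < mRI j ∧ 0 < mIR j ∧ 0 < mII j)
    (hf : ∀ j, CondH1 (fR j) (fI j) (lRR j) (lRI j) (lIR j) (lII j))
    (hg : ∀ j, CondH2 (gR j) (gI j) (mRR j) (mRI j) (mIR j) (mII j))
    (ξ φ : Fin n → ℝ) (hξ : ∀ j, 0 < ξ j) (hφ : ∀ j, 0 < φ j)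
    (ε : ℝ) (hε : 0 < ε)
    (hT1 : ∀ j : Fin n,
      ξ j * (-(d j) + ε + max (aR j j) 0 * lRR j + max (-(aI j j)) 0 * lIR j)
      + (∑ k ∈ Finset.univ.erase j, ξ k * |aR j k| * lRR k)
      + (∑ k, φ k * |aR j k| * lRI k)
      + (∑ k ∈ Finset.univ.erase j, ξ k * |aI j k| * lIR k)
      + (∑ k, φ k * |aI j k| * lII k)
      + (∑ k, (ξ k * |bR j k| * mRR k + φ k * |bR j k| * mRI k
               + ξ k * |bI j k| * mIR k + φ k * |bI j k| * mII k) * Real.exp (ε * τ j k))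
      ≤ 0)
    (hT2 : ∀ j : Fin n,
      φ j * (-(d j) + ε + max (aR j j) 0 * lII j + max (aI j j) 0 * lRI j)
      + (∑ k, ξ k * |aR j k| * lIR k)
      + (∑ k ∈ Finset.univ.erase j, φ k * |aR j k| * lII k)
      + (∑ k, ξ k * |aI j k| * lRR k)
      + (∑ k ∈ Finset.univ.erase j, φ k * |aI j k| * lRI k)
      + (∑ k, (ξ k * |bR j k| * mIR k + φ k * |bR j k| * mII k
               + ξ k * |bI j k| * mRR k + φ k * |bI j k| * mRI k) * Real.exp (ε * τ j k))
      ≤ 0)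
    (hsol : ∃ zR zI, IsSolution n d aR aI bR bI τ uR uI fR fI gR gI zR zI) :
    ∃ zbR zbI : Fin n → ℝ,
      IsEquilibrium n d aR aI bR bI uR uI fR fI gR gI zbR zbI ∧
      (∀ wR wI : Fin n → ℝ,
        IsEquilibrium n d aR aI bR bI uR uI fR fI gR gI wR wI → wR = zbR ∧ wI = zbI) ∧
      (∀ zR zI : Fin n → ℝ → ℝ,
        IsSolution n d aR aI bR bI τ uR uI fR fI gR gI zR zI →
        ∃ c : ℝ, 0 < c ∧ ∀ t : ℝ, 0 ≤ t →
          (∀ j, (ξ j)⁻¹ * |zR j t - zbR j| ≤ c * Real.exp (-ε * t)) ∧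
          (∀ j, (φ j)⁻¹ * |zI j t - zbI j| ≤ c * Real.exp (-ε * t)) ∧
          (∀ j, (ξ j)⁻¹ * |deriv (zR j) t| ≤ c * Real.exp (-ε * t)) ∧
          (∀ j, (φ j)⁻¹ * |deriv (zI j) t| ≤ c * Real.exp (-ε * t))) :=
  stmt0_general n d aR aI bR bI τ hτ uR uI fR fI gR gI lRR lRI lIR lII mRR mRI mIR mII hf hg ξ φ hξ
    hφ ε hε hT1 hT2 hsol
end

section
/- Suppose (f_j^R, f_j^I) satisfy condition H2 with constants λ_j^{RR}, λ_j^{RI}, λ_j^{IR}, λ_j^{II} and (g_j^R, g_j^I) satisfy condition H2 with constants μ_j^{RR}, μ_j^{RI}, μ_j^{IR}, μ_j^{II}, for j = 1,…,n. Suppose there exist positive reals ξ_1,…,ξ_n, φ_1,…,φ_n such that for every j = 1,…,n both: (i) −ξ_j d_j + Σ_{k=1}^n ξ_k|a_{jk}^R|λ_k^{RR} + Σ_{k=1}^n φ_k|a_{jk}^R|λ_k^{RI} + Σ_{k=1}^n ξ_k|a_{jk}^I|λ_k^{IR} + Σ_{k=1}^n φ_k|a_{jk}^I|λ_k^{II}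 + Σ_{k=1}^n ξ_k|b_{jk}^R|μ_k^{RR} + Σ_{k=1}^n φ_k|b_{jk}^R|μ_k^{RI} + Σ_{k=1}^n ξ_k|b_{jk}^I|μ_k^{IR} + Σ_{k=1}^n φ_k|b_{jk}^I|μ_k^{II} < 0, and (ii) −φ_j d_j + Σ_{k=1}^n ξ_k|a_{jk}^R|λ_k^{IR} + Σ_{k=1}^n φ_k|a_{jk}^R|λ_k^{II} + Σ_{k=1}^n ξ_k|a_{jk}^I|λ_k^{RR} + Σ_{k=1}^n φ_k|a_{jk}^I|λ_k^{RI} + Σ_{k=1}^n ξ_k|b_{jk}^R|μ_k^{IR} + Σ_{k=1}^n φ_k|b_{jk}^R|μ_k^{II} + Σ_{k=1}^n ξ_k|b_{jk}^I|μ_k^{RR} + Σ_{k=1}^n φ_k|b_{jk}^I|μ_k^{RI} < 0. If the network admits at least one solution, then it has exactly one equilibrium Z̄ ∈ ℝ^{2n}, and for every solution Z(t) there exist constants c > 0 and δ > 0 such that ‖Z(t) − Z̄‖ ≤ c e^{−δt} (Euclidean norm) for all t ≥ 0. -/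
open Finset

/-!
All estimates live in the weighted sup norm `max_j (|x_j| / ξ_j, |y_j| / φ_j)` on `ℝ²ⁿ`, whose
coordinates are indexed by `Fin n ⊕ Fin n` (real parts, then imaginary parts). By the mean value
theorem, H2 makes the interaction terms Lipschitz with the constants of `gainMatrix`, and the
hypotheses say that the leak `d` beats these constants row by row in this norm.

Hence `Z ↦ F(Z) / d` is a contraction, and its fixed point is the unique equilibrium. For a
solution, the deviation `e` from the equilibrium satisfies the delay differential inequality
`|e_i' + d_i e_i| ≤ ∑ₖ α_ik |e_k(t)| + ∑ₖ β_ik |e_k(t - τ_ik)|`. Choosing `δ > 0` so small that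
the margin survives the factor `exp (δ τ_max)`, no coordinate can be the first to cross the
barrier `C w_i exp (-δ t)`, and continuous induction on `t` gives the exponential decay.
-/

open Filter Topology Set
open scoped NNReal

theorem eventually_nonpos_nhdsGT_of_hasDerivAt {h : ℝ → ℝ} {h' s : ℝ} (hh : HasDerivAt h h' s)
    (hs : h s ≤ 0) (hboundary : h s = 0 → h' < 0) : ∀ᶠ r in 𝓝[>] s, h r ≤ 0 := by
  rcases hs.lt_or_eq with hlt | heq
  · exact (hh.continuousAt.eventually_lt_const hlt).filter_mono nhdsWithin_le_nhds |>.mono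
      fun _ hr => hr.le
  · filter_upwards [hh.hasDerivWithinAt.limsup_slope_le' (lt_irrefl s) (hboundary heq),
      self_mem_nhdsWithin] with r hslope hr
    rw [slope_def_field, heq, sub_zero, div_lt_iff₀ (sub_pos.mpr hr), zero_mul] at hslope
    exact hslope.le

theorem Ici_subset_of_forall_eventually_nhdsGT {B : Set ℝ} {a b : ℝ} (hB : IsClosed B)
    (hab : a ≤ b) (hinit : Icc a b ⊆ B)
    (hstep : ∀ s, b ≤ s → Icc a s ⊆ B → ∀ᶠ r in 𝓝[>] s, r ∈ B) : Ici a ⊆ B := by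
  set C := {s | Icc a s ⊆ B}
  have hC : ∀ t, Icc b t ⊆ C := by
    intro t
    refine IsClosed.Icc_subset_of_forall_mem_nhdsWithin ?_ hinit ?_
    · refine isClosed_of_closure_subset fun x hx => ⟨fun r hr => ?_, ?_⟩
      · rcases hr.2.lt_or_eq with hrx | rfl
        · obtain ⟨y, hyr, hyC, -⟩ := mem_closure_iff_nhds.mp hx _ (Ioi_mem_nhds hrx)
          exact hyC ⟨hr.1, le_of_lt hyr⟩
        · refine hB.closure_subset (closure_mono (fun y hy => hy.1 ⟨?_, le_rfl⟩) hx)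
          exact hab.trans hy.2.1
      · exact closure_minimal inter_subset_right isClosed_Icc hx
    · rintro s ⟨hsC, hbs, -⟩
      obtain ⟨u, hsu, hu⟩ := mem_nhdsGT_iff_exists_Ioo_subset.mp (hstep s hbs hsC)
      refine mem_nhdsGT_iff_exists_Ioo_subset.mpr ⟨u, hsu, fun r hr x hx => ?_⟩
      rcases le_or_gt x s with hxs | hxs
      · exact hsC ⟨hx.1, hxs⟩
      · exact hu ⟨hxs, hx.2.trans_lt hr.2⟩
  intro r hr
  rcases le_or_gt r b with hrb | hbr
  · exact hinit ⟨hr, hrb⟩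
  · exact hC r ⟨hbr.le, le_rfl⟩ ⟨hr, le_rfl⟩

theorem eventually_abs_le_mul_exp_nhdsGT {f : ℝ → ℝ} {f' s c δ D ρ : ℝ} (hf : HasDerivAt f f' s)
    (hc : 0 < c) (hs : |f s| ≤ c * Real.exp (-δ * s))
    (hf' : |f' + D * f s| ≤ ρ * Real.exp (-δ * s)) (hρ : ρ < (D - δ) * c) :
    ∀ᶠ r in 𝓝[>] s, |f r| ≤ c * Real.exp (-δ * r) := by
  set E := Real.exp (-δ * s)
  have hE : 0 < E := Real.exp_pos _
  have hbarrier : HasDerivAt (fun r => c * Real.exp (-δ * r)) (-δ * (c * E)) s := by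
    have hlin : HasDerivAt (fun r => -δ * r) (-δ) s := by
      simpa using (hasDerivAt_id s).const_mul (-δ)
    exact (hlin.exp.const_mul c).congr_deriv (by ring)
  -- compare the squares, which unlike `|f|` are differentiable where the barrier is touched
  refine (eventually_nonpos_nhdsGT_of_hasDerivAt
    (h := fun r => f r ^ 2 - (c * Real.exp (-δ * r)) ^ 2) ((hf.pow 2).sub (hbarrier.pow 2)) ?_
    ?_).mono fun r hr => abs_le_of_sq_le_sq (by linarith) (by positivity)
  · nlinarith [sq_abs (f s), pow_le_pow_left₀ (abs_nonneg (f s)) hs 2]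
  · intro hsq
    have hprod : f s * (f' + D * f s) ≤ c * E * (ρ * E) := by
      calc f s * (f' + D * f s) ≤ |f s| * |f' + D * f s| := by
            rw [← abs_mul]; exact le_abs_self _
        _ ≤ c * E * (ρ * E) := mul_le_mul hs hf' (abs_nonneg _) (by positivity)
    have hneg : c * E ^ 2 * ρ < c * E ^ 2 * ((D - δ) * c) :=
      mul_lt_mul_of_pos_left hρ (by positivity)
    change f s ^ 2 - (c * E) ^ 2 = 0 at hsq
    change 2 * f s ^ (2 - 1) * f' - 2 * (c * E) ^ (2 - 1) * (-δ * (c * E)) < 0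
    norm_num
    have hsqD : D * f s ^ 2 = D * (c * E) ^ 2 := by rw [sub_eq_zero.mp hsq]
    linarith

section DelayInequality

variable {ι : Type*} [Fintype ι]

theorem exists_pos_abs_le_mul_of_isCompact {X : Type*} [TopologicalSpace X] {K : Set X}
    (hK : IsCompact K) {e : ι → X → ℝ} (he : ∀ i, ContinuousOn (e i) K) {w : ι → ℝ}
    (hw : ∀ i, 0 < w i) : ∃ C, 0 < C ∧ ∀ i, ∀ x ∈ K, |e i x| ≤ C * w i := by
  choose M hM using fun i => hK.exists_bound_of_continuousOn (he i)
  obtain ⟨N, hN⟩ := Finite.exists_le fun i => M i / w i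
  refine ⟨max N 1, by positivity, fun i x hx => ?_⟩
  calc |e i x| ≤ M i := hM i x hx
    _ = M i / w i * w i := (div_mul_cancel₀ _ (hw i).ne').symm
    _ ≤ max N 1 * w i := by gcongr; exacts [(hw i).le, (hN i).trans (le_max_left _ _)]

theorem exists_pos_delay_margin {D w a b : ι → ℝ} {T : ℝ} (hrow : ∀ i, a i + b i < D i * w i) :
    ∃ δ, 0 < δ ∧ ∀ i, a i + Real.exp (δ * T) * b i < (D i - δ) * w i := by
  have hnear : ∀ᶠ δ in 𝓝 (0 : ℝ), ∀ i, a i + Real.exp (δ * T) * b i < (D i - δ) * w i :=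
    eventually_all.mpr fun i => ContinuousAt.eventually_lt (by fun_prop) (by fun_prop)
      (by simpa using hrow i)
  exact hnear.exists_gt

theorem abs_deriv_add_le_of_forall_Icc_abs_le {e : ι → ℝ → ℝ} {D w : ι → ℝ}
    {α β σ : ι → ι → ℝ} {C δ T s : ℝ} (hα : ∀ i k, 0 ≤ α i k) (hβ : ∀ i k, 0 ≤ β i k)
    (hσ : ∀ i k, 0 ≤ σ i k) (hσT : ∀ i k, σ i k ≤ T) (hCw : ∀ k, 0 ≤ C * w k) (hδ : 0 ≤ δ)
    (i : ι) (hineq : |deriv (e i) s + D i * e i s|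
      ≤ ∑ k, α i k * |e k s| + ∑ k, β i k * |e k (s - σ i k)|)
    (hpast : ∀ r ∈ Icc (s - T) s, ∀ k, |e k r| ≤ C * w k * Real.exp (-δ * r)) :
    |deriv (e i) s + D i * e i s|
      ≤ C * (∑ k, α i k * w k + Real.exp (δ * T) * ∑ k, β i k * w k) * Real.exp (-δ * s) := by
  have hdelayed : ∀ k, |e k (s - σ i k)|
      ≤ C * w k * (Real.exp (δ * T) * Real.exp (-δ * s)) := fun k =>
    calc |e k (s - σ i k)| ≤ C * w k * Real.exp (-δ * (s - σ i k)) :=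
          hpast _ ⟨by linarith [hσT i k], by linarith [hσ i k]⟩ k
      _ = C * w k * (Real.exp (δ * σ i k) * Real.exp (-δ * s)) := by
          rw [← Real.exp_add]; ring_nf
      _ ≤ C * w k * (Real.exp (δ * T) * Real.exp (-δ * s)) := by
          gcongr
          exacts [hCw k, hσT i k]
  calc |deriv (e i) s + D i * e i s|
      ≤ ∑ k, α i k * |e k s| + ∑ k, β i k * |e k (s - σ i k)| := hineq
    _ ≤ ∑ k, α i k * (C * w k * Real.exp (-δ * s))
        + ∑ k, β i k * (C * w k * (Real.exp (δ * T) * Real.exp (-δ * s))) := by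
      gcongr with k _ k _
      exacts [hα i k, hpast s ⟨by linarith [(hσ i k).trans (hσT i k)], le_rfl⟩ k, hβ i k,
        hdelayed k]
    _ = _ := by
      simp only [Finset.mul_sum, Finset.sum_mul, mul_add, add_mul]
      congr 1 <;> exact Finset.sum_congr rfl fun k _ => by ring

/-- A Halanay-type inequality. -/
theorem exists_abs_le_mul_exp_of_delay_ineq {e : ι → ℝ → ℝ} {D w : ι → ℝ} {α β σ : ι → ι → ℝ}
    (he : ∀ i, Differentiable ℝ (e i)) (hw : ∀ i, 0 < w i)
    (hα : ∀ i k, 0 ≤ α i k) (hβ : ∀ i k, 0 ≤ β i k) (hσ : ∀ i k, 0 ≤ σ i k)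
    (hrow : ∀ i, ∑ k, α i k * w k + ∑ k, β i k * w k < D i * w i)
    (hineq : ∀ t, 0 ≤ t → ∀ i, |deriv (e i) t + D i * e i t|
      ≤ ∑ k, α i k * |e k t| + ∑ k, β i k * |e k (t - σ i k)|) :
    ∃ C δ, 0 < C ∧ 0 < δ ∧ ∀ t, 0 ≤ t → ∀ i, |e i t| ≤ C * w i * Real.exp (-δ * t) := by
  set T := ∑ i, ∑ k, σ i k
  have hσT : ∀ i k, σ i k ≤ T := fun i k =>
    (Finset.single_le_sum (fun k _ => hσ i k) (Finset.mem_univ k)).trans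
      (Finset.single_le_sum (f := fun i => ∑ k, σ i k)
        (fun i _ => Finset.sum_nonneg fun k _ => hσ i k) (Finset.mem_univ i))
  have hT : 0 ≤ T := Finset.sum_nonneg fun i _ => Finset.sum_nonneg fun k _ => hσ i k
  obtain ⟨δ, hδ, hmargin⟩ := exists_pos_delay_margin (T := T) hrow
  obtain ⟨C, hC, hhist⟩ := exists_pos_abs_le_mul_of_isCompact (isCompact_Icc (a := -T) (b := 0))
    (fun i => (he i).continuous.continuousOn) hw
  have hCw : ∀ i, 0 < C * w i := fun i => mul_pos hC (hw i)
  set B := {t | ∀ i, |e i t| ≤ C * w i * Real.exp (-δ * t)}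
  suffices Ici (-T) ⊆ B from ⟨C, δ, hC, hδ, fun t ht => this (by simp; linarith)⟩
  refine Ici_subset_of_forall_eventually_nhdsGT ?_ (neg_nonpos.mpr hT) ?_ ?_
  · simp only [B, ofPred_forall]
    exact isClosed_iInter fun i => isClosed_le (he i).continuous.abs (by fun_prop)
  · intro t ht i
    calc |e i t| ≤ C * w i := hhist i t ht
      _ ≤ C * w i * Real.exp (-δ * t) :=
        le_mul_of_one_le_right (hCw i).le (Real.one_le_exp (by nlinarith [ht.2]))
  intro s hs hpast
  refine eventually_all.mpr fun i => eventually_abs_le_mul_exp_nhdsGT (he i s).hasDerivAt (hCw i)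
    (hpast ⟨by linarith, le_rfl⟩ i) (abs_deriv_add_le_of_forall_Icc_abs_le hα hβ hσ hσT
      (fun k => (hCw k).le) hδ.le i (hineq s hs i)
      fun r hr => hpast ⟨by linarith [hr.1], hr.2⟩) ?_
  calc _ < C * ((D i - δ) * w i) := mul_lt_mul_of_pos_left (hmargin i) hC
    _ = (D i - δ) * (C * w i) := by ring

theorem contractingWith_of_weighted_rowSum_lt {F : (ι → ℝ) → ι → ℝ} {D w : ι → ℝ}
    {γ : ι → ι → ℝ} (hw : ∀ i, 0 < w i) (hγ : ∀ i k, 0 ≤ γ i k)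
    (hF : ∀ x y i, |F x i - F y i| ≤ ∑ k, γ i k * |x k - y k|)
    (hDw : ∀ i, 0 < D i * w i) (hrow : ∀ i, ∑ k, γ i k * w k < D i * w i) :
    ∃ q : ℝ≥0, ContractingWith q fun y i => F (w * y) i / (D i * w i) := by
  set r : ι → ℝ := fun i => (∑ k, γ i k * w k) / (D i * w i)
  set q : ℝ≥0 := Finset.univ.sup fun i => (r i).toNNReal
  have hq : q < 1 := (Finset.sup_lt_iff zero_lt_one).mpr fun i _ =>
    Real.toNNReal_lt_one.mpr ((div_lt_one (hDw i)).mpr (hrow i))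
  refine ⟨q, hq, LipschitzWith.of_dist_le_mul fun y y' =>
    (dist_pi_le_iff (by positivity)).mpr fun i => ?_⟩
  have hqi : r i ≤ q := (Real.le_coe_toNNReal _).trans
    (NNReal.coe_le_coe.mpr (Finset.le_sup (f := fun i => (r i).toNNReal) (Finset.mem_univ i)))
  rw [Real.dist_eq, ← _root_.sub_div, abs_div, abs_of_pos (hDw i), div_le_iff₀ (hDw i)]
  calc |F (w * y) i - F (w * y') i|
      ≤ ∑ k, γ i k * |w k * y k - w k * y' k| := hF _ _ i
    _ ≤ ∑ k, γ i k * w k * dist y y' := by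
      refine Finset.sum_le_sum fun k _ => ?_
      rw [← mul_sub, abs_mul, abs_of_pos (hw k), mul_assoc, ← Real.dist_eq]
      exact mul_le_mul_of_nonneg_left (mul_le_mul_of_nonneg_left (dist_le_pi_dist y y' k)
        (hw k).le) (hγ i k)
    _ = r i * dist y y' * (D i * w i) := by
      rw [← Finset.sum_mul, div_mul_eq_mul_div, div_mul_cancel₀ _ (hDw i).ne']
    _ ≤ q * dist y y' * (D i * w i) := by gcongr; exact (hDw i).le

theorem existsUnique_mul_eq_of_weighted_rowSum_lt {F : (ι → ℝ) → ι → ℝ} {D w : ι → ℝ}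
    {γ : ι → ι → ℝ} (hw : ∀ i, 0 < w i) (hγ : ∀ i k, 0 ≤ γ i k)
    (hF : ∀ x y i, |F x i - F y i| ≤ ∑ k, γ i k * |x k - y k|)
    (hrow : ∀ i, ∑ k, γ i k * w k < D i * w i) :
    ∃! x : ι → ℝ, ∀ i, D i * x i = F x i := by
  have hDw : ∀ i, 0 < D i * w i := fun i =>
    (Finset.sum_nonneg fun k _ => mul_nonneg (hγ i k) (hw k).le).trans_lt (hrow i)
  -- in the coordinates `x = w * y` the equation is the fixed point problem of a contraction
  obtain ⟨q, hΨ⟩ := contractingWith_of_weighted_rowSum_lt hw hγ hF hDw hrow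
  have hfixed : ∀ x : ι → ℝ, (∀ i, D i * x i = F x i) ↔
      Function.IsFixedPt (fun y i => F (w * y) i / (D i * w i)) (x / w) := by
    intro x
    have hx : w * (x / w) = x := by ext k; simp [mul_div_cancel₀ _ (hw k).ne']
    rw [Function.IsFixedPt, funext_iff, hx]
    refine forall_congr' fun i => ?_
    rw [Pi.div_apply, div_eq_div_iff (hDw i).ne' (hw i).ne',
      show x i * (D i * w i) = D i * x i * w i by ring, mul_left_inj' (hw i).ne', eq_comm]
  have hdiv : ∀ y, w * y / w = y := fun y => by ext k; simp [(hw k).ne']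
  refine ⟨w * ContractingWith.fixedPoint _ hΨ, (hfixed _).mpr ?_, fun x hx => ?_⟩
  · rw [hdiv]; exact hΨ.fixedPoint_isFixedPt
  · rw [← hΨ.fixedPoint_unique ((hfixed x).mp hx)]
    ext k; simp [mul_div_cancel₀ _ (hw k).ne']

theorem sqrt_sum_sq_le_mul_of_abs_le {x w : ι → ℝ} {c : ℝ} (hc : 0 ≤ c)
    (h : ∀ i, |x i| ≤ c * w i) : √(∑ i, x i ^ 2) ≤ c * √(∑ i, w i ^ 2) := by
  rw [← Real.sqrt_sq hc, ← Real.sqrt_mul (sq_nonneg c), Finset.mul_sum]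
  refine Real.sqrt_le_sqrt (Finset.sum_le_sum fun i _ => ?_)
  rw [← mul_pow, ← sq_abs (x i)]
  exact pow_le_pow_left₀ (abs_nonneg _) (h i) 2

end DelayInequality

theorem abs_sub_le_of_abs_partialDeriv_le {f : ℝ → ℝ → ℝ} {L₁ L₂ : ℝ}
    (hf : Differentiable ℝ fun p : ℝ × ℝ => f p.1 p.2)
    (h₁ : ∀ x y, |deriv (fun s => f s y) x| ≤ L₁) (h₂ : ∀ x y, |deriv (fun s => f x s) y| ≤ L₂)
    (x y x' y' : ℝ) : |f x y - f x' y'| ≤ L₁ * |x - x'| + L₂ * |y - y'| := by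
  have hmvt : ∀ {g : ℝ → ℝ} {L : ℝ}, Differentiable ℝ g → (∀ s, |deriv g s| ≤ L) →
      ∀ a b, |g a - g b| ≤ L * |a - b| := fun hg hL a b =>
    convex_univ.norm_image_sub_le_of_norm_deriv_le (fun s _ => hg s) (fun s _ => hL s)
      (mem_univ b) (mem_univ a)
  calc |f x y - f x' y'| ≤ |f x y - f x' y| + |f x' y - f x' y'| := abs_sub_le _ _ _
    _ ≤ L₁ * |x - x'| + L₂ * |y - y'| := add_le_add
      (hmvt (hf.comp (differentiable_id.prodMk (differentiable_const y))) (h₁ · y) x x')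
      (hmvt (hf.comp ((differentiable_const x').prodMk differentiable_id)) (h₂ x') y y')

namespace CondH2

variable {g₁ g₂ : ℝ → ℝ → ℝ} {LRR LRI LIR LII : ℝ}

theorem swap (h : CondH2 g₁ g₂ LRR LRI LIR LII) : CondH2 g₂ g₁ LIR LII LRR LRI :=
  ⟨h.2.1, h.1, fun x y => ⟨(h.2.2 x y).2.2.1, (h.2.2 x y).2.2.2, (h.2.2 x y).1, (h.2.2 x y).2.1⟩⟩

theorem nonneg (h : CondH2 g₁ g₂ LRR LRI LIR LII) : 0 ≤ LRR ∧ 0 ≤ LRI ∧ 0 ≤ LIR ∧ 0 ≤ LII :=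
  have h₀ := h.2.2 0 0
  ⟨(abs_nonneg _).trans h₀.1, (abs_nonneg _).trans h₀.2.1, (abs_nonneg _).trans h₀.2.2.1,
    (abs_nonneg _).trans h₀.2.2.2⟩

theorem abs_sub_le (h : CondH2 g₁ g₂ LRR LRI LIR LII) (x y x' y' : ℝ) :
    |g₁ x y - g₁ x' y'| ≤ LRR * |x - x'| + LRI * |y - y'| :=
  abs_sub_le_of_abs_partialDeriv_le (h.1.differentiable one_ne_zero) (fun x y => (h.2.2 x y).1)
    (fun x y => (h.2.2 x y).2.1) x y x' y'

end CondH2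

section Coupling

variable {κ : Type*} [Fintype κ]

def couplingRe (A B : κ → ℝ) (g₁ g₂ : κ → ℝ → ℝ → ℝ) (p q : κ → ℝ) : ℝ :=
  ∑ k, (A k * g₁ k (p k) (q k) - B k * g₂ k (p k) (q k))

def couplingIm (A B : κ → ℝ) (g₁ g₂ : κ → ℝ → ℝ → ℝ) (p q : κ → ℝ) : ℝ :=
  ∑ k, (A k * g₂ k (p k) (q k) + B k * g₁ k (p k) (q k))

theorem couplingIm_eq_couplingRe (A B : κ → ℝ) (g₁ g₂ : κ → ℝ → ℝ → ℝ) :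
    couplingIm A B g₁ g₂ = couplingRe A (-B) g₂ g₁ := by
  ext p q; simp [couplingIm, couplingRe]

variable {g₁ g₂ : κ → ℝ → ℝ → ℝ} {LRR LRI LIR LII : κ → ℝ}

theorem abs_couplingRe_sub_le (hg : ∀ k, CondH2 (g₁ k) (g₂ k) (LRR k) (LRI k) (LIR k) (LII k))
    (A B p q p' q' : κ → ℝ) :
    |couplingRe A B g₁ g₂ p q - couplingRe A B g₁ g₂ p' q'|
      ≤ ∑ k, (|A k| * LRR k + |B k| * LIR k) * |p k - p' k|
        + ∑ k, (|A k| * LRI k + |B k| * LII k) * |q k - q' k| := by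
  rw [couplingRe, couplingRe, ← Finset.sum_sub_distrib, ← Finset.sum_add_distrib]
  refine (Finset.abs_sum_le_sum_abs _ _).trans (Finset.sum_le_sum fun k _ => ?_)
  have h₁ := (hg k).abs_sub_le (p k) (q k) (p' k) (q' k)
  have h₂ := (hg k).swap.abs_sub_le (p k) (q k) (p' k) (q' k)
  calc |A k * g₁ k (p k) (q k) - B k * g₂ k (p k) (q k)
        - (A k * g₁ k (p' k) (q' k) - B k * g₂ k (p' k) (q' k))|
      = |A k * (g₁ k (p k) (q k) - g₁ k (p' k) (q' k))
          - B k * (g₂ k (p k) (q k) - g₂ k (p' k) (q' k))| := by ring_nf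
    _ ≤ |A k| * |g₁ k (p k) (q k) - g₁ k (p' k) (q' k)|
          + |B k| * |g₂ k (p k) (q k) - g₂ k (p' k) (q' k)| := by
        rw [← abs_mul, ← abs_mul]; exact abs_sub _ _
    _ ≤ |A k| * (LRR k * |p k - p' k| + LRI k * |q k - q' k|)
          + |B k| * (LIR k * |p k - p' k| + LII k * |q k - q' k|) := by gcongr
    _ = _ := by ring

theorem abs_couplingIm_sub_le (hg : ∀ k, CondH2 (g₁ k) (g₂ k) (LRR k) (LRI k) (LIR k) (LII k))
    (A B p q p' q' : κ → ℝ) :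
    |couplingIm A B g₁ g₂ p q - couplingIm A B g₁ g₂ p' q'|
      ≤ ∑ k, (|A k| * LIR k + |B k| * LRR k) * |p k - p' k|
        + ∑ k, (|A k| * LII k + |B k| * LRI k) * |q k - q' k| := by
  simpa [couplingIm_eq_couplingRe] using
    abs_couplingRe_sub_le (fun k => (hg k).swap) A (-B) p q p' q'

end Coupling

section GainMatrix

variable {κ : Type*} (A B : κ → κ → ℝ) (LRR LRI LIR LII : κ → ℝ)

/-- Lipschitz constants of the real (`inl`) and imaginary (`inr`) parts of row `j` of the
coupling `∑ₖ (A j k + i B j k) g_k` in the real and imaginary parts of the `k`-th argument. -/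
def gainMatrix : κ ⊕ κ → κ ⊕ κ → ℝ
  | .inl j, .inl k => |A j k| * LRR k + |B j k| * LIR k
  | .inl j, .inr k => |A j k| * LRI k + |B j k| * LII k
  | .inr j, .inl k => |A j k| * LIR k + |B j k| * LRR k
  | .inr j, .inr k => |A j k| * LII k + |B j k| * LRI k

variable {A B LRR LRI LIR LII}

theorem gainMatrix_nonneg (hL : ∀ k, 0 ≤ LRR k ∧ 0 ≤ LRI k ∧ 0 ≤ LIR k ∧ 0 ≤ LII k) :
    ∀ i k, 0 ≤ gainMatrix A B LRR LRI LIR LII i k := by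
  rintro (j | j) (k | k) <;> obtain ⟨h₁, h₂, h₃, h₄⟩ := hL k <;> simp only [gainMatrix] <;>
    positivity

theorem gainMatrix_inr (j : κ) :
    gainMatrix A B LRR LRI LIR LII (.inr j) = gainMatrix A B LIR LII LRR LRI (.inl j) := by
  ext (k | k) <;> rfl

theorem sum_gainMatrix_inl_mul [Fintype κ] (ξ φ : κ → ℝ) (j : κ) :
    ∑ k, gainMatrix A B LRR LRI LIR LII (.inl j) k * Sum.elim ξ φ k
      = (∑ k, ξ k * |A j k| * LRR k) + (∑ k, φ k * |A j k| * LRI k)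
        + (∑ k, ξ k * |B j k| * LIR k) + (∑ k, φ k * |B j k| * LII k) := by
  simp only [Fintype.sum_sum_type, gainMatrix, Sum.elim_inl, Sum.elim_inr, add_mul,
    Finset.sum_add_distrib]
  simp only [mul_comm, mul_left_comm]
  ring

theorem sum_gainMatrix_inr_mul [Fintype κ] (ξ φ : κ → ℝ) (j : κ) :
    ∑ k, gainMatrix A B LRR LRI LIR LII (.inr j) k * Sum.elim ξ φ k
      = (∑ k, ξ k * |A j k| * LIR k) + (∑ k, φ k * |A j k| * LII k)
        + (∑ k, ξ k * |B j k| * LRR k) + (∑ k, φ k * |B j k| * LRI k) := by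
  rw [gainMatrix_inr, sum_gainMatrix_inl_mul]

end GainMatrix

section Network

variable {n : ℕ} {d : Fin n → ℝ} {aR aI bR bI τ : Fin n → Fin n → ℝ} {uR uI : Fin n → ℝ}
  {fR fI gR gI : Fin n → ℝ → ℝ → ℝ}

variable (aR aI bR bI uR uI fR fI gR gI) in
/-- The right-hand side of the network without the leak term `-d z`, on the state
`Z = (z^R, z^I)`, with all delays set to zero. -/
def networkField (Z : Fin n ⊕ Fin n → ℝ) : Fin n ⊕ Fin n → ℝ
  | .inl j => couplingRe (aR j) (aI j) fR fI (Z ∘ .inl) (Z ∘ .inr)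
      + couplingRe (bR j) (bI j) gR gI (Z ∘ .inl) (Z ∘ .inr) + uR j
  | .inr j => couplingIm (aR j) (aI j) fR fI (Z ∘ .inl) (Z ∘ .inr)
      + couplingIm (bR j) (bI j) gR gI (Z ∘ .inl) (Z ∘ .inr) + uI j

theorem isEquilibrium_iff_forall_mul_eq_networkField {zR zI : Fin n → ℝ} :
    IsEquilibrium n d aR aI bR bI uR uI fR fI gR gI zR zI ↔ ∀ i,
      Sum.elim d d i * Sum.elim zR zI i
        = networkField aR aI bR bI uR uI fR fI gR gI (Sum.elim zR zI) i := by
  simp only [IsEquilibrium, Sum.forall, Sum.elim_inl, Sum.elim_inr, networkField,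
    Sum.elim_comp_inl, Sum.elim_comp_inr, couplingRe, couplingIm]
  refine and_congr (forall_congr' fun j => ?_) (forall_congr' fun j => ?_) <;>
    constructor <;> intro h <;> linarith

theorem abs_networkField_sub_le {lRR lRI lIR lII mRR mRI mIR mII : Fin n → ℝ}
    (hf : ∀ j, CondH2 (fR j) (fI j) (lRR j) (lRI j) (lIR j) (lII j))
    (hg : ∀ j, CondH2 (gR j) (gI j) (mRR j) (mRI j) (mIR j) (mII j)) (Z Z' : Fin n ⊕ Fin n → ℝ)
    (i : Fin n ⊕ Fin n) :
    |networkField aR aI bR bI uR uI fR fI gR gI Z i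
        - networkField aR aI bR bI uR uI fR fI gR gI Z' i|
      ≤ ∑ k, (gainMatrix aR aI lRR lRI lIR lII i k + gainMatrix bR bI mRR mRI mIR mII i k)
          * |Z k - Z' k| := by
  have hsplit : ∀ a b a' b' u : ℝ, |a + b + u - (a' + b' + u)| ≤ |a - a'| + |b - b'| :=
    fun a b a' b' u => (abs_add_le _ _).trans_eq' (by ring_nf)
  simp only [add_mul, Finset.sum_add_distrib, Fintype.sum_sum_type]
  rcases i with j | j
  · have ha := abs_couplingRe_sub_le hf (aR j) (aI j) (Z ∘ .inl) (Z ∘ .inr) (Z' ∘ .inl) (Z' ∘ .inr)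
    have hb := abs_couplingRe_sub_le hg (bR j) (bI j) (Z ∘ .inl) (Z ∘ .inr) (Z' ∘ .inl) (Z' ∘ .inr)
    simp only [Function.comp_apply] at ha hb
    exact (hsplit _ _ _ _ _).trans (by simp only [gainMatrix]; linarith)
  · have ha := abs_couplingIm_sub_le hf (aR j) (aI j) (Z ∘ .inl) (Z ∘ .inr) (Z' ∘ .inl) (Z' ∘ .inr)
    have hb := abs_couplingIm_sub_le hg (bR j) (bI j) (Z ∘ .inl) (Z ∘ .inr) (Z' ∘ .inl) (Z' ∘ .inr)
    simp only [Function.comp_apply] at ha hb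
    exact (hsplit _ _ _ _ _).trans (by simp only [gainMatrix]; linarith)

theorem IsSolution.abs_deriv_add_le {zR zI : Fin n → ℝ → ℝ} {zbR zbI : Fin n → ℝ}
    {lRR lRI lIR lII mRR mRI mIR mII : Fin n → ℝ}
    (hsol : IsSolution n d aR aI bR bI τ uR uI fR fI gR gI zR zI)
    (heq : IsEquilibrium n d aR aI bR bI uR uI fR fI gR gI zbR zbI)
    (hf : ∀ j, CondH2 (fR j) (fI j) (lRR j) (lRI j) (lIR j) (lII j))
    (hg : ∀ j, CondH2 (gR j) (gI j) (mRR j) (mRI j) (mIR j) (mII j)) {t : ℝ} (ht : 0 ≤ t)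
    (i : Fin n ⊕ Fin n) :
    |deriv (fun s => Sum.elim zR zI i s - Sum.elim zbR zbI i) t
        + Sum.elim d d i * (Sum.elim zR zI i t - Sum.elim zbR zbI i)|
      ≤ ∑ k, gainMatrix aR aI lRR lRI lIR lII i k * |Sum.elim zR zI k t - Sum.elim zbR zbI k|
        + ∑ k, gainMatrix bR bI mRR mRI mIR mII i k
          * |Sum.elim zR zI k (t - τ (i.elim id id) (k.elim id id)) - Sum.elim zbR zbI k| := by
  have hsplit : ∀ {z' z zb D a b a' b' u : ℝ}, z' = -D * z + a + b + u →
      -D * zb + a' + b' + u = 0 → |z' + D * (z - zb)| ≤ |a - a'| + |b - b'| :=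
    fun {z' z zb D a b a' b' u} h h' => by
      rw [show z' + D * (z - zb) = (a - a') + (b - b') by rw [h]; linear_combination h']
      exact abs_add_le _ _
  rcases i with j | j <;>
    simp only [deriv_sub_const, Fintype.sum_sum_type, Sum.elim_inl, Sum.elim_inr, id]
  · have ha := abs_couplingRe_sub_le hf (aR j) (aI j) (fun k => zR k t) (fun k => zI k t) zbR zbI
    have hb := abs_couplingRe_sub_le hg (bR j) (bI j) (fun k => zR k (t - τ j k))
      (fun k => zI k (t - τ j k)) zbR zbI
    simp only [couplingRe] at ha hb
    exact (hsplit (hsol.2.2.1 j t ht) (heq.1 j)).trans (by simp only [gainMatrix]; linarith)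
  · have ha := abs_couplingIm_sub_le hf (aR j) (aI j) (fun k => zR k t) (fun k => zI k t) zbR zbI
    have hb := abs_couplingIm_sub_le hg (bR j) (bI j) (fun k => zR k (t - τ j k))
      (fun k => zI k (t - τ j k)) zbR zbI
    simp only [couplingIm] at ha hb
    exact (hsplit (hsol.2.2.2 j t ht) (heq.2 j)).trans (by simp only [gainMatrix]; linarith)

end Network

theorem stmt2_general
    (n : ℕ)
    (d : Fin n → ℝ)
    (aR aI bR bI τ : Fin n → Fin n → ℝ) (hτ : ∀ j k, 0 ≤ τ j k)
    (uR uI : Fin n → ℝ)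
    (fR fI gR gI : Fin n → ℝ → ℝ → ℝ)
    (lRR lRI lIR lII mRR mRI mIR mII : Fin n → ℝ)
    (hf : ∀ j, CondH2 (fR j) (fI j) (lRR j) (lRI j) (lIR j) (lII j))
    (hg : ∀ j, CondH2 (gR j) (gI j) (mRR j) (mRI j) (mIR j) (mII j))
    (ξ φ : Fin n → ℝ) (hξ : ∀ j, 0 < ξ j) (hφ : ∀ j, 0 < φ j)
    (hT5 : ∀ j : Fin n,
      -(ξ j) * d j
      + (∑ k, ξ k * |aR j k| * lRR k) + (∑ k, φ k * |aR j k| * lRI k)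
      + (∑ k, ξ k * |aI j k| * lIR k) + (∑ k, φ k * |aI j k| * lII k)
      + (∑ k, ξ k * |bR j k| * mRR k) + (∑ k, φ k * |bR j k| * mRI k)
      + (∑ k, ξ k * |bI j k| * mIR k) + (∑ k, φ k * |bI j k| * mII k) < 0)
    (hT6 : ∀ j : Fin n,
      -(φ j) * d j
      + (∑ k, ξ k * |aR j k| * lIR k) + (∑ k, φ k * |aR j k| * lII k)
      + (∑ k, ξ k * |aI j k| * lRR k) + (∑ k, φ k * |aI j k| * lRI k)
      + (∑ k, ξ k * |bR j k| * mIR k) + (∑ k, φ k * |bR j k| * mII k)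
      + (∑ k, ξ k * |bI j k| * mRR k) + (∑ k, φ k * |bI j k| * mRI k) < 0) :
    ∃ zbR zbI : Fin n → ℝ,
      IsEquilibrium n d aR aI bR bI uR uI fR fI gR gI zbR zbI ∧
      (∀ wR wI : Fin n → ℝ,
        IsEquilibrium n d aR aI bR bI uR uI fR fI gR gI wR wI → wR = zbR ∧ wI = zbI) ∧
      (∀ zR zI : Fin n → ℝ → ℝ,
        IsSolution n d aR aI bR bI τ uR uI fR fI gR gI zR zI →
        ∃ c δ : ℝ, 0 < c ∧ 0 < δ ∧ ∀ t : ℝ, 0 ≤ t →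
          Real.sqrt ((∑ j, (zR j t - zbR j) ^ 2) + ∑ j, (zI j t - zbI j) ^ 2)
            ≤ c * Real.exp (-δ * t)) := by
  set w : Fin n ⊕ Fin n → ℝ := Sum.elim ξ φ
  have hw : ∀ i, 0 < w i := Sum.forall.mpr ⟨hξ, hφ⟩
  have hα := gainMatrix_nonneg (A := aR) (B := aI) fun k => (hf k).nonneg
  have hβ := gainMatrix_nonneg (A := bR) (B := bI) fun k => (hg k).nonneg
  have hrow : ∀ i, ∑ k, gainMatrix aR aI lRR lRI lIR lII i k * w k
      + ∑ k, gainMatrix bR bI mRR mRI mIR mII i k * w k < Sum.elim d d i * w i := by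
    rintro (j | j)
    · simp only [w, sum_gainMatrix_inl_mul, Sum.elim_inl]; linarith [hT5 j]
    · simp only [w, sum_gainMatrix_inr_mul, Sum.elim_inr]; linarith [hT6 j]
  obtain ⟨Z, hZ, hZunique⟩ := existsUnique_mul_eq_of_weighted_rowSum_lt hw
    (fun i k => add_nonneg (hα i k) (hβ i k)) (abs_networkField_sub_le hf hg)
    (fun i => by simpa only [add_mul, Finset.sum_add_distrib] using hrow i)
  have hZeq : IsEquilibrium n d aR aI bR bI uR uI fR fI gR gI (Z ∘ .inl) (Z ∘ .inr) :=
    isEquilibrium_iff_forall_mul_eq_networkField.mpr (by rwa [Sum.elim_comp_inl_inr])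
  refine ⟨Z ∘ .inl, Z ∘ .inr, hZeq, fun wR wI hW => ?_, fun zR zI hsol => ?_⟩
  · obtain rfl := hZunique _ (isEquilibrium_iff_forall_mul_eq_networkField.mp hW)
    exact ⟨rfl, rfl⟩
  obtain ⟨C, δ, hC, hδ, hdecay⟩ := exists_abs_le_mul_exp_of_delay_ineq
    (e := fun i t => Sum.elim zR zI i t - Sum.elim (Z ∘ .inl) (Z ∘ .inr) i)
    (Sum.forall.mpr ⟨fun j => ((hsol.1 j).differentiable one_ne_zero).sub_const _,
      fun j => ((hsol.2.1 j).differentiable one_ne_zero).sub_const _⟩)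
    hw hα hβ (fun _ _ => hτ _ _) hrow (fun t ht i => hsol.abs_deriv_add_le hZeq hf hg ht i)
  refine ⟨C * √(∑ i, w i ^ 2) + 1, δ, by positivity, hδ, fun t ht => ?_⟩
  have hnorm := sqrt_sum_sq_le_mul_of_abs_le (by positivity) fun i =>
    (hdecay t ht i).trans_eq (mul_right_comm C (w i) (Real.exp (-δ * t)))
  rw [Fintype.sum_sum_type] at hnorm
  exact hnorm.trans (by nlinarith [Real.exp_pos (-δ * t)])

theorem stmt2
    (n : ℕ) (hn : 1 ≤ n)
    (d : Fin n → ℝ) (hd : ∀ j, 0 < d j)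
    (aR aI bR bI τ : Fin n → Fin n → ℝ) (hτ : ∀ j k, 0 ≤ τ j k)
    (uR uI : Fin n → ℝ)
    (fR fI gR gI : Fin n → ℝ → ℝ → ℝ)
    (lRR lRI lIR lII mRR mRI mIR mII : Fin n → ℝ)
    (hl : ∀ j, 0 < lRR j ∧ 0 < lRI j ∧ 0 < lIR j ∧ 0 < lII j)
    (hm : ∀ j, 0 < mRR j ∧ 0 < mRI j ∧ 0 < mIR j ∧ 0 < mII j)
    (hf : ∀ j, CondH2 (fR j) (fI j) (lRR j) (lRI j) (lIR j) (lII j))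
    (hg : ∀ j, CondH2 (gR j) (gI j) (mRR j) (mRI j) (mIR j) (mII j))
    (ξ φ : Fin n → ℝ) (hξ : ∀ j, 0 < ξ j) (hφ : ∀ j, 0 < φ j)
    (hT5 : ∀ j : Fin n,
      -(ξ j) * d j
      + (∑ k, ξ k * |aR j k| * lRR k) + (∑ k, φ k * |aR j k| * lRI k)
      + (∑ k, ξ k * |aI j k| * lIR k) + (∑ k, φ k * |aI j k| * lII k)
      + (∑ k, ξ k * |bR j k| * mRR k) + (∑ k, φ k * |bR j k| * mRI k)
      + (∑ k, ξ k * |bI j k| * mIR k) + (∑ k, φ k * |bI j k| * mII k) < 0)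
    (hT6 : ∀ j : Fin n,
      -(φ j) * d j
      + (∑ k, ξ k * |aR j k| * lIR k) + (∑ k, φ k * |aR j k| * lII k)
      + (∑ k, ξ k * |aI j k| * lRR k) + (∑ k, φ k * |aI j k| * lRI k)
      + (∑ k, ξ k * |bR j k| * mIR k) + (∑ k, φ k * |bR j k| * mII k)
      + (∑ k, ξ k * |bI j k| * mRR k) + (∑ k, φ k * |bI j k| * mRI k) < 0)
    (hsol : ∃ zR zI, IsSolution n d aR aI bR bI τ uR uI fR fI gR gI zR zI) :
    ∃ zbR zbI : Fin n → ℝ,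
      IsEquilibrium n d aR aI bR bI uR uI fR fI gR gI zbR zbI ∧
      (∀ wR wI : Fin n → ℝ,
        IsEquilibrium n d aR aI bR bI uR uI fR fI gR gI wR wI → wR = zbR ∧ wI = zbI) ∧
      (∀ zR zI : Fin n → ℝ → ℝ,
        IsSolution n d aR aI bR bI τ uR uI fR fI gR gI zR zI →
        ∃ c δ : ℝ, 0 < c ∧ 0 < δ ∧ ∀ t : ℝ, 0 ≤ t →
          Real.sqrt ((∑ j, (zR j t - zbR j) ^ 2) + ∑ j, (zI j t - zbI j) ^ 2)
            ≤ c * Real.exp (-δ * t)) :=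
  stmt2_general n d aR aI bR bI τ hτ uR uI fR fI gR gI lRR lRI lIR lII mRR mRI mIR mII hf hg ξ φ hξ
    hφ hT5 hT6
end
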